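/- arXiv:2207.07204 — 5 statements merged into one kernel-verified Lean document; each statement's English description precedes it below -/
import Mathlib

section
/- Let K be a number field and let A be a set of nonzero prime ideals of the ring of integers of K. Suppose there exist a real constant δ ≥ 0 and a real constant C such that ∑_{𝔭 ∈ A, N𝔭 ≤ x} 1/N𝔭 = δ·log log x + C + o(1/log x) as x → ∞. Let b ≥ 2 be an integer and let S be a positive integer with b^{m−1} ≤ S < b^m for some integer m ≥ 1 (i.e., S is a string of m base-b digits with leading digit nonzero). Let A_{b,S} be the set of 𝔭 ∈ A such that N𝔭 begins with the base-b string S. Then lim_{x→∞} (1/log log x) · ∑_{𝔭 ∈ A_{b,S}, N𝔭 ≤ x} 1/N𝔭 = δ·log_b(1 + 1/S). -/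
open Filter Asymptotics Real NumberField
open Finset Topology


private lemma myTsum_set_finite {ι : Type*} (f : ι → ℝ) {s : Set ι} (hs : s.Finite) :
    ∑' i : s, f i = ∑ i ∈ hs.toFinset, f i := by
  rw [_root_.tsum_subtype s f,
    tsum_eq_sum (s := hs.toFinset) (fun b hb => Set.indicator_of_notMem
      (fun h => hb (hs.mem_toFinset.2 h)) f)]
  exact Finset.sum_congr rfl fun x hx => Set.indicator_of_mem (hs.mem_toFinset.1 hx) f

/-- ratio tends to one if the difference is bounded and the denominator tends to infinity -/
private lemma myRatio_tendsto_one {α : Type*} {l : Filter α} {u v : α → ℝ} (c₁ c₂ : ℝ)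
    (hbound : ∀ᶠ x in l, c₁ ≤ u x - v x ∧ u x - v x ≤ c₂)
    (hv : Tendsto v l atTop) : Tendsto (fun x => u x / v x) l (𝓝 1) := by
  have hvpos : ∀ᶠ x in l, 0 < v x := hv.eventually_gt_atTop 0
  have h0 : Tendsto (fun x => (u x - v x) / v x) l (𝓝 0) := by
    have hlo : Tendsto (fun x => c₁ / v x) l (𝓝 0) := tendsto_const_nhds.div_atTop hv
    have hhi : Tendsto (fun x => c₂ / v x) l (𝓝 0) := tendsto_const_nhds.div_atTop hv
    refine tendsto_of_tendsto_of_tendsto_of_le_of_le' hlo hhi ?_ ?_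
    · filter_upwards [hbound, hvpos] with x hx hv0
      exact by gcongr; exact hx.1
    · filter_upwards [hbound, hvpos] with x hx hv0
      exact by gcongr; exact hx.2
  have h1 : Tendsto (fun x => 1 + (u x - v x) / v x) l (𝓝 (1 + 0)) :=
    tendsto_const_nhds.add h0
  rw [add_zero] at h1
  refine h1.congr' ?_
  filter_upwards [hvpos] with x hv0
  field_simp
  ring

/-- weighted Cesàro with weights 1/t : if t * a t → K then (∑_{t<T} a t)/log T → K. -/
private lemma myCesaro_log {a : ℕ → ℝ} {K : ℝ}
    (h : Tendsto (fun t : ℕ => (t : ℝ) * a t) atTop (𝓝 K)) :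
    Tendsto (fun T : ℕ => (∑ t ∈ Finset.range T, a t) / Real.log T) atTop (𝓝 K) := by
  set w : ℕ → ℝ := fun t => ((t : ℝ))⁻¹ with hw
  have hwnonneg : ∀ t, 0 ≤ w t := fun t => by positivity
  set H : ℕ → ℝ := fun T => ∑ t ∈ Finset.range T, w t with hH
  have hHeq : ∀ T : ℕ, H T = (harmonic (T - 1) : ℝ) := by
    intro T
    cases T with
    | zero => simp [hH, harmonic]
    | succ n =>
      simp only [hH, hw, Nat.succ_sub_one]
      rw [Finset.sum_range_succ']
      rw [harmonic]
      push_cast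
      simp
  have hHlb : ∀ T : ℕ, 1 ≤ T → Real.log T ≤ H T := by
    intro T hT
    rw [hHeq]
    have h2 := log_add_one_le_harmonic (T - 1)
    rwa [Nat.sub_add_cancel hT] at h2
  have hHub : ∀ T : ℕ, 2 ≤ T → H T ≤ 1 + Real.log T := by
    intro T hT
    rw [hHeq]
    have h1 : (harmonic (T-1) : ℝ) ≤ 1 + Real.log (T-1 : ℕ) :=
      harmonic_le_one_add_log (T-1)
    refine h1.trans ?_
    have h2 : ((T - 1 : ℕ) : ℝ) ≤ (T : ℝ) := by exact_mod_cast Nat.sub_le T 1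
    have hpos : (0:ℝ) < ((T - 1 : ℕ) : ℝ) := by
      have : 1 ≤ T - 1 := by omega
      exact_mod_cast Nat.lt_of_lt_of_le Nat.zero_lt_one this
    linarith [Real.log_le_log hpos h2]
  have hlogtop : Tendsto (fun T : ℕ => Real.log T) atTop atTop :=
    Real.tendsto_log_atTop.comp tendsto_natCast_atTop_atTop
  have hHtop : Tendsto H atTop atTop := by
    refine tendsto_atTop_mono' atTop ?_ hlogtop
    filter_upwards [eventually_ge_atTop 1] with T hT using hHlb T hT
  have hHlog : Tendsto (fun T : ℕ => H T / Real.log T) atTop (𝓝 1) := by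
    refine myRatio_tendsto_one 0 1 ?_ hlogtop
    filter_upwards [eventually_ge_atTop 2] with T hT
    constructor
    · linarith [hHlb T (by omega)]
    · linarith [hHub T hT]
  set F : ℕ → ℝ := fun t => a t - K * w t with hF
  have hFo : F =o[atTop] w := by
    have h1 : (fun t : ℕ => ((t:ℝ) * a t - K) * w t) =o[atTop] w := by
      have h2 : (fun t : ℕ => ((t:ℝ) * a t - K)) =o[atTop] (fun _ => (1:ℝ)) :=
        (isLittleO_one_iff ℝ).2 (by simpa using h.sub_const K)
      simpa using h2.mul_isBigO (isBigO_refl w atTop)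
    refine h1.congr' ?_ Filter.EventuallyEq.rfl
    filter_upwards [eventually_ge_atTop 1] with t ht
    have htne : ((t:ℝ)) ≠ 0 := by positivity
    simp only [hF, hw]
    field_simp
  have hFsum : (fun T => ∑ t ∈ Finset.range T, F t) =o[atTop] H :=
    hFo.sum_range hwnonneg hHtop
  have hFdiv : Tendsto (fun T => (∑ t ∈ Finset.range T, F t) / H T) atTop (𝓝 0) :=
    hFsum.tendsto_div_nhds_zero
  have hFlog : Tendsto (fun T : ℕ => (∑ t ∈ Finset.range T, F t) / Real.log T) atTop (𝓝 0) := by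
    have h3 := hFdiv.mul hHlog
    rw [show (0:ℝ) * 1 = 0 from by ring] at h3
    refine h3.congr' ?_
    filter_upwards [hHtop.eventually_gt_atTop 0] with T hT
    rw [div_mul_div_comm, mul_comm (∑ t ∈ Finset.range T, F t) (H T),
      mul_div_mul_left _ _ (ne_of_gt hT)]
  have key : ∀ T : ℕ, (∑ t ∈ Finset.range T, a t) / Real.log T
      = (∑ t ∈ Finset.range T, F t) / Real.log T + K * (H T / Real.log T) := by
    intro T
    have h4 : ∑ t ∈ Finset.range T, a t = (∑ t ∈ Finset.range T, F t) + K * H T := by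
      simp only [hF, hH, Finset.sum_sub_distrib, Finset.mul_sum]
      ring
    rw [h4, add_div, mul_div_assoc]
  have h5 : Tendsto (fun T : ℕ => (∑ t ∈ Finset.range T, F t) / Real.log T
      + K * (H T / Real.log T)) atTop (𝓝 (0 + K * 1)) :=
    hFlog.add (tendsto_const_nhds.mul hHlog)
  rw [zero_add, mul_one] at h5
  exact h5.congr fun T => (key T).symm

/-- if c₁ b^t ≤ g t ≤ c₂ b^t then log (g t) / t → log b -/
private lemma myLog_div_tendsto {b : ℝ} (hb : 1 < b) {g : ℕ → ℝ} {c₁ c₂ : ℝ} (hc₁ : 0 < c₁)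
    (hbd : ∀ᶠ t : ℕ in atTop, c₁ * b ^ t ≤ g t ∧ g t ≤ c₂ * b ^ t) :
    Tendsto (fun t : ℕ => Real.log (g t) / t) atTop (𝓝 (Real.log b)) := by
  have hb0 : (0:ℝ) < b := lt_trans zero_lt_one hb
  obtain ⟨t₀, h₀⟩ := hbd.exists
  have hc₂ : 0 < c₂ :=
    lt_of_lt_of_le hc₁ (le_of_mul_le_mul_right (h₀.1.trans h₀.2) (pow_pos hb0 t₀))
  have hinv : Tendsto (fun t : ℕ => ((t:ℝ))⁻¹) atTop (𝓝 0) :=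
    tendsto_inv_atTop_zero.comp tendsto_natCast_atTop_atTop
  have hlo : Tendsto (fun t : ℕ => Real.log c₁ * ((t:ℝ))⁻¹ + Real.log b) atTop
      (𝓝 (Real.log b)) := by
    have := (hinv.const_mul (Real.log c₁)).add_const (Real.log b)
    simpa using this
  have hhi : Tendsto (fun t : ℕ => Real.log c₂ * ((t:ℝ))⁻¹ + Real.log b) atTop
      (𝓝 (Real.log b)) := by
    have := (hinv.const_mul (Real.log c₂)).add_const (Real.log b)
    simpa using this
  refine tendsto_of_tendsto_of_tendsto_of_le_of_le' hlo hhi ?_ ?_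
  · filter_upwards [hbd, eventually_ge_atTop 1] with t hbd ht
    have ht0 : (0:ℝ) < t := by exact_mod_cast ht
    have hp : (0:ℝ) < c₁ * b ^ t := by positivity
    have h1 : Real.log (c₁ * b ^ t) ≤ Real.log (g t) := Real.log_le_log hp hbd.1
    rw [Real.log_mul (ne_of_gt hc₁) (by positivity), Real.log_pow] at h1
    rw [div_eq_mul_inv]
    calc Real.log c₁ * ((t:ℝ))⁻¹ + Real.log b
        = (Real.log c₁ + (t:ℝ) * Real.log b) * ((t:ℝ))⁻¹ := by field_simp
      _ ≤ Real.log (g t) * ((t:ℝ))⁻¹ := by gcongr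
  · filter_upwards [hbd, eventually_ge_atTop 1] with t hbd ht
    have ht0 : (0:ℝ) < t := by exact_mod_cast ht
    have hp : (0:ℝ) < c₁ * b ^ t := by positivity
    have hg : 0 < g t := lt_of_lt_of_le hp hbd.1
    have h1 : Real.log (g t) ≤ Real.log (c₂ * b ^ t) := Real.log_le_log hg hbd.2
    rw [Real.log_mul (ne_of_gt hc₂) (by positivity), Real.log_pow] at h1
    rw [div_eq_mul_inv]
    calc Real.log (g t) * ((t:ℝ))⁻¹
        ≤ (Real.log c₂ + (t:ℝ) * Real.log b) * ((t:ℝ))⁻¹ := by gcongr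
      _ = Real.log c₂ * ((t:ℝ))⁻¹ + Real.log b := by field_simp

private lemma myLog_sub_tendsto {b : ℝ} (hb : 1 < b) {c : ℝ} (hc : 0 < c) :
    Tendsto (fun t : ℕ => Real.log (c * b ^ t - 1) - Real.log (c * b ^ t)) atTop (𝓝 0) := by
  have hpt : Tendsto (fun t : ℕ => c * b ^ t) atTop atTop :=
    (tendsto_pow_atTop_atTop_of_one_lt hb).const_mul_atTop hc
  have h1 : Tendsto (fun t : ℕ => 1 - (c * b ^ t)⁻¹) atTop (𝓝 1) := by
    have := tendsto_const_nhds.sub hpt.inv_tendsto_atTop (f := fun _ : ℕ => (1:ℝ))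
    simpa using this
  have h2 := (Real.continuousAt_log one_ne_zero).tendsto.comp h1
  rw [Real.log_one] at h2
  refine h2.congr' ?_
  filter_upwards [hpt.eventually_ge_atTop 2] with t ht
  have hpos : (0:ℝ) < c * b ^ t := by linarith
  have hpos1 : (0:ℝ) < c * b ^ t - 1 := by linarith
  show Real.log (1 - (c * b ^ t)⁻¹) = _
  rw [show 1 - (c * b ^ t)⁻¹ = (c * b ^ t - 1) / (c * b ^ t) from by field_simp,
    Real.log_div (ne_of_gt hpos1) (ne_of_gt hpos)]

private lemma myQlim (P : ℝ → ℝ) (δ C : ℝ)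
    (hsum : (fun x => P x - (δ * Real.log (Real.log x) + C)) =o[atTop]
      fun x : ℝ => 1 / Real.log x)
    {b S : ℕ} (hb : 2 ≤ b) (hS : 1 ≤ S) :
    Tendsto (fun t : ℕ =>
        (t:ℝ) * (P (((S:ℝ)+1) * (b:ℝ)^t - 1) - P ((S:ℝ) * (b:ℝ)^t - 1)))
      atTop (𝓝 (δ * (Real.log (1 + 1/(S:ℝ)) / Real.log b))) := by
  have hb2 : (2:ℝ) ≤ (b:ℝ) := by exact_mod_cast hb
  have hbR : (1:ℝ) < b := by linarith
  have hb0 : (0:ℝ) < b := by linarith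
  have hSR : (1:ℝ) ≤ (S:ℝ) := by exact_mod_cast hS
  have hS0 : (0:ℝ) < S := by linarith
  have hlogb : 0 < Real.log b := Real.log_pos hbR
  set αr : ℕ → ℝ := fun t => (S:ℝ) * (b:ℝ)^t - 1 with hαr
  set βr : ℕ → ℝ := fun t => ((S:ℝ)+1) * (b:ℝ)^t - 1 with hβr
  set E : ℝ → ℝ := fun x => P x - (δ * Real.log (Real.log x) + C) with hEdef
  have hE0 : Tendsto (fun x => E x * Real.log x) atTop (𝓝 0) := by
    have h1 : (fun x => E x * Real.log x) =o[atTop] fun x => 1/Real.log x * Real.log x :=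
      hsum.mul_isBigO (isBigO_refl (fun x => Real.log x) atTop)
    have h2 : (fun x => E x * Real.log x) =o[atTop] fun _ : ℝ => (1:ℝ) := by
      refine h1.congr' Filter.EventuallyEq.rfl ?_
      filter_upwards [Real.tendsto_log_atTop.eventually_gt_atTop 0] with x hx
      exact one_div_mul_cancel (ne_of_gt hx)
    exact (isLittleO_one_iff ℝ).1 h2
  have hpowtop : Tendsto (fun t : ℕ => (b:ℝ)^t) atTop atTop :=
    tendsto_pow_atTop_atTop_of_one_lt hbR
  have hαtop : Tendsto αr atTop atTop := by
    have h1 := tendsto_atTop_add_const_right atTop (-1 : ℝ) (hpowtop.const_mul_atTop hS0)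
    refine h1.congr fun t => ?_
    simp [hαr, sub_eq_add_neg]
  have hβtop : Tendsto βr atTop atTop := by
    have h1 := tendsto_atTop_add_const_right atTop (-1 : ℝ)
      (hpowtop.const_mul_atTop (show (0:ℝ) < (S:ℝ)+1 by linarith))
    refine h1.congr fun t => ?_
    simp [hβr, sub_eq_add_neg]
  have honept : ∀ t : ℕ, (1:ℝ) ≤ (b:ℝ)^t := fun t => by
    calc (1:ℝ) = 1^t := (one_pow t).symm
    _ ≤ (b:ℝ)^t := pow_le_pow_left₀ zero_le_one (le_of_lt hbR) t
  have hbt2 : ∀ᶠ t : ℕ in atTop, (2:ℝ) ≤ (b:ℝ)^t := by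
    filter_upwards [eventually_ge_atTop 1] with t ht
    calc (2:ℝ) ≤ (b:ℝ) := hb2
    _ ≤ (b:ℝ)^t := le_self_pow₀ (le_of_lt hbR) (by omega)
  have hαbd : ∀ᶠ t : ℕ in atTop, (S:ℝ)/2 * (b:ℝ)^t ≤ αr t ∧ αr t ≤ (S:ℝ) * (b:ℝ)^t := by
    filter_upwards [hbt2] with t ht
    have hbt0 : (0:ℝ) < (b:ℝ)^t := by positivity
    constructor
    · simp only [hαr]; nlinarith
    · simp only [hαr]; linarith
  have hβbd : ∀ᶠ t : ℕ in atTop, (S:ℝ) * (b:ℝ)^t ≤ βr t ∧ βr t ≤ ((S:ℝ)+1) * (b:ℝ)^t := by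
    refine Filter.Eventually.of_forall fun t => ?_
    have h1 := honept t
    have hbt0 : (0:ℝ) < (b:ℝ)^t := by positivity
    constructor
    · simp only [hβr]; nlinarith
    · simp only [hβr]; linarith
  have hαlog : Tendsto (fun t : ℕ => Real.log (αr t) / t) atTop (𝓝 (Real.log b)) :=
    myLog_div_tendsto hbR (show (0:ℝ) < (S:ℝ)/2 by linarith) hαbd
  have hβlog : Tendsto (fun t : ℕ => Real.log (βr t) / t) atTop (𝓝 (Real.log b)) :=
    myLog_div_tendsto hbR hS0 hβbd
  have hαinv : Tendsto (fun t : ℕ => (t:ℝ) / Real.log (αr t)) atTop (𝓝 (1/Real.log b)) := by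
    have h1 := hαlog.inv₀ (ne_of_gt hlogb)
    simp only [inv_div] at h1
    rw [one_div]
    exact h1
  have hβinv : Tendsto (fun t : ℕ => (t:ℝ) / Real.log (βr t)) atTop (𝓝 (1/Real.log b)) := by
    have h1 := hβlog.inv₀ (ne_of_gt hlogb)
    simp only [inv_div] at h1
    rw [one_div]
    exact h1
  have hEβ : Tendsto (fun t : ℕ => (t:ℝ) * E (βr t)) atTop (𝓝 0) := by
    have h1 := (hE0.comp hβtop).mul hβinv
    rw [zero_mul] at h1
    refine h1.congr' ?_
    filter_upwards [(Real.tendsto_log_atTop.comp hβtop).eventually_gt_atTop 0] with t ht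
    have htne : Real.log (βr t) ≠ 0 := ne_of_gt ht
    show E (βr t) * Real.log (βr t) * ((t:ℝ)/Real.log (βr t)) = (t:ℝ) * E (βr t)
    exact (fun e l tt (hl : l ≠ 0) => by field_simp :
      ∀ e l tt : ℝ, l ≠ 0 → e * l * (tt / l) = tt * e) _ _ _ htne
  have hEα : Tendsto (fun t : ℕ => (t:ℝ) * E (αr t)) atTop (𝓝 0) := by
    have h1 := (hE0.comp hαtop).mul hαinv
    rw [zero_mul] at h1
    refine h1.congr' ?_
    filter_upwards [(Real.tendsto_log_atTop.comp hαtop).eventually_gt_atTop 0] with t ht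
    have htne : Real.log (αr t) ≠ 0 := ne_of_gt ht
    show E (αr t) * Real.log (αr t) * ((t:ℝ)/Real.log (αr t)) = (t:ℝ) * E (αr t)
    exact (fun e l tt (hl : l ≠ 0) => by field_simp :
      ∀ e l tt : ℝ, l ≠ 0 → e * l * (tt / l) = tt * e) _ _ _ htne
  set c : ℝ := Real.log (1 + 1/(S:ℝ)) with hc
  have hcval : Real.log ((S:ℝ)+1) - Real.log S = c := by
    rw [hc, ← Real.log_div (by positivity) (ne_of_gt hS0)]
    congr 1
    field_simp
  have hDβ := myLog_sub_tendsto hbR (show (0:ℝ) < (S:ℝ)+1 by linarith)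
  have hDα := myLog_sub_tendsto hbR hS0
  have hD : Tendsto (fun t : ℕ => Real.log (βr t) - Real.log (αr t)) atTop (𝓝 c) := by
    have h1 := (hDβ.sub hDα).add_const (Real.log ((S:ℝ)+1) - Real.log (S:ℝ))
    rw [sub_zero, zero_add, hcval] at h1
    refine h1.congr fun t => ?_
    have hbtne : ((b:ℝ)^t) ≠ 0 := by positivity
    rw [Real.log_mul (by linarith : ((S:ℝ)+1) ≠ 0) hbtne,
      Real.log_mul (ne_of_gt hS0) hbtne]
    simp only [hαr, hβr]
    rw [← hcval]
    ring
  have hlαtop : Tendsto (fun t : ℕ => Real.log (αr t)) atTop atTop :=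
    Real.tendsto_log_atTop.comp hαtop
  set u : ℕ → ℝ := fun t => (Real.log (βr t) - Real.log (αr t)) / Real.log (αr t) with hu
  have hu0 : Tendsto u atTop (𝓝 0) := by
    have h1 := hD.mul hlαtop.inv_tendsto_atTop
    rw [mul_zero] at h1
    exact h1.congr fun t => (div_eq_mul_inv _ _).symm
  have htu : Tendsto (fun t : ℕ => (t:ℝ) * u t) atTop (𝓝 (c / Real.log b)) := by
    have h1 := hD.mul hαinv
    rw [mul_one_div] at h1
    exact h1.congr fun t => by simp only [hu]; ring
  have h1u : Tendsto (fun t : ℕ => 1/(1 + u t)) atTop (𝓝 1) := by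
    have h2 : Tendsto (fun t : ℕ => 1 + u t) atTop (𝓝 (1+0)) := tendsto_const_nhds.add hu0
    rw [add_zero] at h2
    have h3 := h2.inv₀ one_ne_zero
    rw [inv_one] at h3
    exact h3.congr fun t => (one_div _).symm
  have hαpos : ∀ᶠ t : ℕ in atTop, 0 < αr t := hαtop.eventually_gt_atTop 0
  have hlαpos : ∀ᶠ t : ℕ in atTop, 0 < Real.log (αr t) := hlαtop.eventually_gt_atTop 0
  have hβα : ∀ t, αr t ≤ βr t := fun t => by
    have := honept t
    simp only [hαr, hβr]
    nlinarith
  have huev : ∀ᶠ t : ℕ in atTop, 0 ≤ u t := by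
    filter_upwards [hαpos, hlαpos] with t h1 h2
    exact div_nonneg (by linarith [Real.log_le_log h1 (hβα t)]) (le_of_lt h2)
  have hkey : ∀ᶠ t : ℕ in atTop,
      Real.log (Real.log (βr t)) - Real.log (Real.log (αr t)) = Real.log (1 + u t) := by
    filter_upwards [hlαpos, hαpos] with t h2 h1
    have hlβpos : 0 < Real.log (βr t) := lt_of_lt_of_le h2 (Real.log_le_log h1 (hβα t))
    rw [show (1:ℝ) + u t = Real.log (βr t) / Real.log (αr t) from by
      simp only [hu]; field_simp; ring,
      Real.log_div (ne_of_gt hlβpos) (ne_of_gt h2)]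
  have hmain : Tendsto (fun t : ℕ =>
      (t:ℝ) * (Real.log (Real.log (βr t)) - Real.log (Real.log (αr t))))
      atTop (𝓝 (c / Real.log b)) := by
    have hlow : Tendsto (fun t : ℕ => ((t:ℝ) * u t) * (1/(1+u t))) atTop
        (𝓝 (c/Real.log b * 1)) := htu.mul h1u
    rw [mul_one] at hlow
    refine tendsto_of_tendsto_of_tendsto_of_le_of_le' hlow htu ?_ ?_
    · filter_upwards [hkey, huev] with t hk hu0'
      rw [hk]
      have h1pu : (0:ℝ) < 1 + u t := by linarith
      have hlog_ge : u t / (1 + u t) ≤ Real.log (1 + u t) := by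
        have h4 := Real.log_le_sub_one_of_pos (show (0:ℝ) < (1+u t)⁻¹ by positivity)
        rw [Real.log_inv, show (1 + u t)⁻¹ - 1 = -(u t / (1+u t)) from by field_simp; ring] at h4
        linarith
      calc (t:ℝ) * u t * (1/(1+u t)) = (t:ℝ) * (u t/(1+u t)) := by ring
        _ ≤ (t:ℝ) * Real.log (1 + u t) :=
          mul_le_mul_of_nonneg_left hlog_ge (Nat.cast_nonneg t)
    · filter_upwards [hkey, huev] with t hk hu0'
      rw [hk]
      have h1pu : (0:ℝ) < 1 + u t := by linarith
      have h5 : Real.log (1 + u t) ≤ u t := by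
        have := Real.log_le_sub_one_of_pos h1pu
        linarith
      exact mul_le_mul_of_nonneg_left h5 (Nat.cast_nonneg t)
  have hq : ∀ t : ℕ, P (βr t) - P (αr t)
      = δ * (Real.log (Real.log (βr t)) - Real.log (Real.log (αr t)))
        + (E (βr t) - E (αr t)) := by
    intro t
    simp only [hEdef]
    ring
  have h6 := (hmain.const_mul δ).add (hEβ.sub hEα)
  rw [sub_zero, add_zero] at h6
  have h7 : Tendsto (fun t : ℕ => (t:ℝ) * (P (βr t) - P (αr t))) atTop
      (𝓝 (δ * (c / Real.log b))) := by
    refine h6.congr fun t => ?_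
    rw [hq t]
    ring
  rw [show δ * (c / Real.log b) = δ * (Real.log (1 + 1/(S:ℝ)) / Real.log b) from by rw [hc]]
    at h7
  exact h7
private theorem myAbstract {ι : Type*} (N : ι → ℕ) (A : Set ι) (f : ι → ℝ) (hf : ∀ i, 0 ≤ f i)
    (hfin : ∀ n : ℕ, {i : ι | i ∈ A ∧ N i ≤ n}.Finite)
    (δ C : ℝ)
    (hsum : (fun x : ℝ =>
        (∑' i : {i : ι // i ∈ A ∧ (N i : ℝ) ≤ x}, f i.1) - (δ * Real.log (Real.log x) + C))
        =o[atTop] fun x : ℝ => 1 / Real.log x)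
    (b S : ℕ) (hb : 2 ≤ b) (hS : 1 ≤ S) :
    Tendsto (fun x : ℝ =>
        (∑' i : {i : ι // i ∈ A ∧
            (∃ t : ℕ, S * b ^ t ≤ N i ∧ N i < (S + 1) * b ^ t) ∧ (N i : ℝ) ≤ x}, f i.1)
          / Real.log (Real.log x))
      atTop (𝓝 (δ * Real.logb b (1 + 1 / (S : ℝ)))) := by
  classical
  have hb1 : 1 < b := by omega
  have hbR : (1:ℝ) < b := by exact_mod_cast hb1
  have hSR : (1:ℝ) ≤ (S:ℝ) := by exact_mod_cast hS
  have hS0R : (0:ℝ) < S := by linarith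
  have hlogb : 0 < Real.log b := Real.log_pos hbR
  have hfinR : ∀ x : ℝ, {i : ι | i ∈ A ∧ (N i : ℝ) ≤ x}.Finite := fun x =>
    (hfin ⌊x⌋₊).subset fun i hi => ⟨hi.1, Nat.le_floor hi.2⟩
  have hfinlt : ∀ n : ℕ, {i : ι | i ∈ A ∧ N i < n}.Finite := fun n =>
    (hfin n).subset fun i hi => ⟨hi.1, le_of_lt hi.2⟩
  have hfinB : ∀ x : ℝ, {i : ι | i ∈ A ∧
      (∃ t : ℕ, S * b ^ t ≤ N i ∧ N i < (S + 1) * b ^ t) ∧ (N i : ℝ) ≤ x}.Finite := fun x =>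
    (hfinR x).subset fun i hi => ⟨hi.1, hi.2.2⟩
  set P : ℝ → ℝ := fun x => ∑' i : {i : ι // i ∈ A ∧ (N i : ℝ) ≤ x}, f i.1 with hPdef
  set Q : ℝ → ℝ := fun x => ∑' i : {i : ι // i ∈ A ∧
      (∃ t : ℕ, S * b ^ t ≤ N i ∧ N i < (S + 1) * b ^ t) ∧ (N i : ℝ) ≤ x}, f i.1 with hQdef
  have hsum' : (fun x : ℝ => P x - (δ * Real.log (Real.log x) + C)) =o[atTop]
      (fun x : ℝ => 1 / Real.log x) := hsum
  set Pn : ℕ → ℝ := fun n => ∑ i ∈ (hfinlt n).toFinset, f i with hPn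
  have hPnP : ∀ n : ℕ, P ((n:ℝ) - 1) = Pn n := by
    intro n
    have h1 : P ((n:ℝ) - 1) = ∑ i ∈ (hfinR ((n:ℝ)-1)).toFinset, f i :=
      myTsum_set_finite f (hfinR ((n:ℝ)-1))
    rw [h1]
    apply Finset.sum_congr ?_ fun _ _ => rfl
    ext i
    simp only [Set.Finite.mem_toFinset, Set.mem_setOf_eq]
    have hiff : ((N i : ℝ) ≤ (n:ℝ) - 1) ↔ N i < n := by
      rw [le_sub_iff_add_le, show ((N i:ℝ) + 1) = ((N i + 1 : ℕ):ℝ) from by push_cast; ring,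
        Nat.cast_le]
      omega
    rw [hiff]
  have blkfin : ∀ t : ℕ, {i : ι | i ∈ A ∧ S*b^t ≤ N i ∧ N i < (S+1)*b^t}.Finite := fun t =>
    Set.Finite.subset (hfinlt ((S+1)*b^t)) (fun i hi => ⟨hi.1, hi.2.2⟩)
  set BF : ℕ → Finset ι := fun t => (blkfin t).toFinset with hBF
  have hBFmem : ∀ t i, i ∈ BF t ↔ i ∈ A ∧ S*b^t ≤ N i ∧ N i < (S+1)*b^t := by
    intro t i
    simp only [hBF, Set.Finite.mem_toFinset, Set.mem_setOf_eq]
  have hDFmem : ∀ n i, i ∈ (hfinlt n).toFinset ↔ i ∈ A ∧ N i < n := fun n i => by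
    simp [Set.Finite.mem_toFinset]
  have hstep : ∀ t : ℕ, (S+1)*b^t ≤ S*b^(t+1) := by
    intro t
    have h1 : S + 1 ≤ S * b := by nlinarith
    calc (S+1)*b^t ≤ (S*b)*b^t := Nat.mul_le_mul_right _ h1
      _ = S*b^(t+1) := by ring
  set q : ℕ → ℝ := fun t => Pn ((S+1)*b^t) - Pn (S*b^t) with hqd
  set G : ℕ → ℝ := fun T => ∑ t ∈ Finset.range T, q t with hGd
  have hDFsub : ∀ t : ℕ, (hfinlt (S*b^t)).toFinset ⊆ (hfinlt ((S+1)*b^t)).toFinset := by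
    intro t i hi
    rw [hDFmem] at hi ⊢
    have h2 : S*b^t ≤ (S+1)*b^t := Nat.mul_le_mul_right _ (by omega)
    exact ⟨hi.1, lt_of_lt_of_le hi.2 h2⟩
  have hq_sum : ∀ t : ℕ, q t = ∑ i ∈ BF t, f i := by
    intro t
    have hBFeq : BF t = (hfinlt ((S+1)*b^t)).toFinset \ (hfinlt (S*b^t)).toFinset := by
      ext i
      rw [hBFmem, Finset.mem_sdiff, hDFmem, hDFmem]
      constructor
      · rintro ⟨h1, h2, h3⟩
        exact ⟨⟨h1, h3⟩, fun hc => absurd hc.2 (not_lt.2 h2)⟩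
      · rintro ⟨⟨h1, h3⟩, h4⟩
        exact ⟨h1, not_lt.1 fun hc => h4 ⟨h1, hc⟩, h3⟩
    rw [hBFeq, Finset.sum_sdiff_eq_sub (hDFsub t)]
  have hdisj_lt : ∀ {t t' : ℕ}, t < t' → ∀ i, i ∈ BF t → i ∈ BF t' → False := by
    intro t t' h i hi hi'
    rw [hBFmem] at hi hi'
    have h1 : (S+1)*b^t ≤ S*b^(t+1) := hstep t
    have h2 : S*b^(t+1) ≤ S*b^t' := Nat.mul_le_mul_left _ (Nat.pow_le_pow_right (by omega) (by omega))
    have h3 := lt_of_lt_of_le (lt_of_lt_of_le hi.2.2 h1) h2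
    exact absurd hi'.2.1 (not_le.2 h3)
  set Tx : ℝ → ℕ := fun x => Nat.log b ⌊x / S⌋₊ with hTxd
  have hfl1 : ∀ x : ℝ, (S:ℝ) ≤ x → 1 ≤ ⌊x / S⌋₊ := by
    intro x hx
    apply Nat.le_floor
    rw [Nat.cast_one, le_div_iff₀ hS0R]
    linarith
  have hTl : ∀ x : ℝ, (S:ℝ) ≤ x → ((S * b ^ Tx x : ℕ) : ℝ) ≤ x := by
    intro x hx
    have h1 : b ^ (Tx x) ≤ ⌊x / S⌋₊ := Nat.pow_log_le_self b (by have := hfl1 x hx; omega)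
    have hx0 : (0:ℝ) ≤ x / S := div_nonneg (by linarith) (le_of_lt hS0R)
    calc ((S * b ^ Tx x : ℕ) : ℝ) = (S:ℝ) * ((b ^ Tx x : ℕ):ℝ) := by push_cast; ring
      _ ≤ (S:ℝ) * (⌊x / S⌋₊:ℝ) :=
        mul_le_mul_of_nonneg_left (by exact_mod_cast h1) (le_of_lt hS0R)
      _ ≤ (S:ℝ) * (x / S) := mul_le_mul_of_nonneg_left (Nat.floor_le hx0) (le_of_lt hS0R)
      _ = x := by field_simp
  have hTu : ∀ x : ℝ, (S:ℝ) ≤ x → x < ((S * b ^ (Tx x + 1) : ℕ) : ℝ) := by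
    intro x hx
    have h2 : ⌊x / S⌋₊ + 1 ≤ b ^ (Tx x + 1) :=
      Nat.succ_le_of_lt (Nat.lt_pow_succ_log_self hb1 _)
    have h3 : x / S < (⌊x/S⌋₊:ℝ) + 1 := Nat.lt_floor_add_one _
    calc x = (S:ℝ) * (x / S) := by field_simp
      _ < (S:ℝ) * ((⌊x/S⌋₊:ℝ) + 1) := mul_lt_mul_of_pos_left h3 hS0R
      _ ≤ (S:ℝ) * ((b ^ (Tx x + 1) : ℕ):ℝ) := by gcongr; exact_mod_cast h2
      _ = ((S * b ^ (Tx x + 1) : ℕ) : ℝ) := by push_cast; ring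
  have hTtop : Tendsto Tx atTop atTop := by
    rw [tendsto_atTop_atTop]
    intro n
    refine ⟨((S * b ^ n : ℕ) : ℝ), fun x hx => ?_⟩
    have h1 : (b ^ n : ℕ) ≤ ⌊x / S⌋₊ := by
      apply Nat.le_floor
      rw [le_div_iff₀ hS0R]
      calc ((b^n:ℕ):ℝ) * S = ((S * b^n : ℕ):ℝ) := by push_cast; ring
        _ ≤ x := hx
    calc n = Nat.log b (b ^ n) := (Nat.log_pow hb1 n).symm
      _ ≤ Nat.log b ⌊x / S⌋₊ := Nat.log_mono_right h1
  have hQsum : ∀ x : ℝ, Q x = ∑ i ∈ (hfinB x).toFinset, f i := fun x =>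
    myTsum_set_finite f (hfinB x)
  have hBmem : ∀ (x : ℝ) i, i ∈ (hfinB x).toFinset ↔ i ∈ A ∧
      (∃ t : ℕ, S * b ^ t ≤ N i ∧ N i < (S + 1) * b ^ t) ∧ (N i : ℝ) ≤ x := fun x i => by
    simp only [Set.Finite.mem_toFinset, Set.mem_setOf_eq]
  have hGsum : ∀ T : ℕ, G T = ∑ i ∈ (Finset.range T).biUnion BF, f i := by
    intro T
    have hpd : (↑(Finset.range T) : Set ℕ).PairwiseDisjoint BF := by
      intro t _ t' _ hne
      refine Finset.disjoint_left.2 fun i hi hi' => ?_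
      rcases Nat.lt_or_ge t t' with h|h
      · exact hdisj_lt h i hi hi'
      · exact hdisj_lt (by omega : t' < t) i hi' hi
    rw [Finset.sum_biUnion hpd]
    exact Finset.sum_congr rfl fun t _ => hq_sum t
  have hlow : ∀ x : ℝ, (S:ℝ) ≤ x → G (Tx x) ≤ Q x := by
    intro x hx
    rw [hQsum x, hGsum (Tx x)]
    apply Finset.sum_le_sum_of_subset_of_nonneg ?_ fun i _ _ => hf i
    intro i hi
    rw [Finset.mem_biUnion] at hi
    obtain ⟨t, ht, hit⟩ := hi
    rw [hBFmem] at hit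
    rw [hBmem]
    refine ⟨hit.1, ⟨t, hit.2⟩, ?_⟩
    have h1 : N i < S * b ^ (Tx x) := by
      have h2 : (S+1)*b^t ≤ S*b^(t+1) := hstep t
      have h3 : S*b^(t+1) ≤ S*b^(Tx x) :=
        Nat.mul_le_mul_left _ (Nat.pow_le_pow_right (by omega) (Finset.mem_range.1 ht))
      exact lt_of_lt_of_le hit.2.2 (le_trans h2 h3)
    calc (N i:ℝ) ≤ ((S * b^(Tx x) : ℕ):ℝ) := by exact_mod_cast le_of_lt h1
      _ ≤ x := hTl x hx
  have hup : ∀ x : ℝ, (S:ℝ) ≤ x → Q x ≤ G (Tx x + 1) := by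
    intro x hx
    rw [hQsum x, hGsum (Tx x + 1)]
    apply Finset.sum_le_sum_of_subset_of_nonneg ?_ fun i _ _ => hf i
    intro i hi
    rw [hBmem] at hi
    obtain ⟨h1, ⟨t, h2, h3⟩, h4⟩ := hi
    rw [Finset.mem_biUnion]
    refine ⟨t, Finset.mem_range.2 ?_, (hBFmem t i).2 ⟨h1, h2, h3⟩⟩
    have h5 : N i < S * b ^ (Tx x + 1) := by
      have h6 := lt_of_le_of_lt h4 (hTu x hx)
      exact_mod_cast h6
    have h7 : b ^ t < b ^ (Tx x + 1) :=
      Nat.lt_of_mul_lt_mul_left (lt_of_le_of_lt h2 h5)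
    exact (Nat.pow_lt_pow_iff_right hb1).1 h7
  have hcast : ∀ t : ℕ, (((S+1) * b^t : ℕ):ℝ) - 1 = ((S:ℝ)+1) * (b:ℝ)^t - 1 := by
    intro t; push_cast; ring
  have hcast' : ∀ t : ℕ, ((S * b^t : ℕ):ℝ) - 1 = (S:ℝ) * (b:ℝ)^t - 1 := by
    intro t; push_cast; ring
  have hq_lim : Tendsto (fun t : ℕ => (t:ℝ) * q t) atTop
      (𝓝 (δ * (Real.log (1 + 1/(S:ℝ)) / Real.log b))) := by
    have h1 := myQlim P δ C hsum' hb hS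
    refine h1.congr fun t => ?_
    congr 1
    rw [show q t = Pn ((S+1)*b^t) - Pn (S*b^t) from rfl, ← hPnP, ← hPnP, hcast t, hcast' t]
  set l : ℝ := δ * (Real.log (1 + 1/(S:ℝ)) / Real.log b) with hl
  have hGlim : Tendsto (fun T : ℕ => G T / Real.log T) atTop (𝓝 l) := myCesaro_log hq_lim
  have hGlim' : Tendsto (fun T : ℕ => G (T+1) / Real.log ((T+1 : ℕ))) atTop (𝓝 l) :=
    hGlim.comp (tendsto_add_atTop_nat 1)
  have hLLtop : Tendsto (fun x : ℝ => Real.log (Real.log x)) atTop atTop :=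
    Real.tendsto_log_atTop.comp Real.tendsto_log_atTop
  set c₃ : ℝ := 2 * Real.log b + Real.log S with hc₃
  have hc₃pos : 0 < c₃ := by
    have := Real.log_nonneg hSR
    rw [hc₃]; linarith
  have hbnds : ∀ᶠ x : ℝ in atTop,
      Real.log (Real.log b) ≤ Real.log (Real.log x) - Real.log (Tx x)
      ∧ Real.log (Real.log x) - Real.log (Tx x) ≤ Real.log c₃ := by
    filter_upwards [eventually_ge_atTop (S:ℝ), hTtop.eventually_ge_atTop 1,
      Real.tendsto_log_atTop.eventually_gt_atTop 0] with x hxS hT1 hlx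
    have hT1R : (1:ℝ) ≤ (Tx x : ℝ) := by exact_mod_cast hT1
    have hx0 : (0:ℝ) < x := by linarith
    have h1 : ((S * b ^ Tx x : ℕ):ℝ) ≤ x := hTl x hxS
    have h1' : (S:ℝ) * (b:ℝ)^(Tx x) ≤ x := by
      calc (S:ℝ) * (b:ℝ)^(Tx x) = ((S * b ^ Tx x : ℕ):ℝ) := by push_cast; ring
        _ ≤ x := h1
    have hpowpos : (0:ℝ) < (S:ℝ) * (b:ℝ)^(Tx x) := by positivity
    have h2 : Real.log ((S:ℝ) * (b:ℝ)^(Tx x)) ≤ Real.log x := Real.log_le_log hpowpos h1'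
    rw [Real.log_mul (ne_of_gt hS0R) (by positivity), Real.log_pow] at h2
    have hlogS : 0 ≤ Real.log S := Real.log_nonneg hSR
    have hlb : (Tx x:ℝ) * Real.log b ≤ Real.log x := by linarith
    have h3 : x < ((S * b ^ (Tx x + 1) : ℕ):ℝ) := hTu x hxS
    have h3' : x ≤ (S:ℝ) * (b:ℝ)^(Tx x + 1) := by
      calc x ≤ ((S * b ^ (Tx x+1) : ℕ):ℝ) := le_of_lt h3
        _ = (S:ℝ) * (b:ℝ)^(Tx x+1) := by push_cast; ring
    have h4 : Real.log x ≤ Real.log ((S:ℝ) * (b:ℝ)^(Tx x + 1)) := Real.log_le_log hx0 h3'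
    rw [Real.log_mul (ne_of_gt hS0R) (by positivity), Real.log_pow] at h4
    push_cast at h4
    have hub : Real.log x ≤ (Tx x:ℝ) * c₃ := by
      rw [hc₃]
      nlinarith [mul_nonneg (sub_nonneg.2 hT1R) (le_of_lt hlogb),
        mul_nonneg (sub_nonneg.2 hT1R) hlogS]
    have hTlogb : (0:ℝ) < (Tx x:ℝ) * Real.log b := by positivity
    have h5 : Real.log ((Tx x:ℝ) * Real.log b) ≤ Real.log (Real.log x) :=
      Real.log_le_log hTlogb hlb
    have h6 : Real.log (Real.log x) ≤ Real.log ((Tx x:ℝ) * c₃) :=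
      Real.log_le_log (lt_of_lt_of_le hTlogb hlb) hub
    rw [Real.log_mul (by positivity) (ne_of_gt hlogb)] at h5
    rw [Real.log_mul (by positivity) (ne_of_gt hc₃pos)] at h6
    constructor <;> linarith
  have hrat1 : Tendsto (fun x : ℝ => Real.log (Tx x) / Real.log (Real.log x)) atTop (𝓝 1) := by
    refine myRatio_tendsto_one (-(Real.log c₃)) (-(Real.log (Real.log b))) ?_ hLLtop
    filter_upwards [hbnds] with x hx
    constructor <;> linarith [hx.1, hx.2]
  have hrat2 : Tendsto (fun x : ℝ => Real.log ((Tx x + 1 : ℕ)) / Real.log (Real.log x))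
      atTop (𝓝 1) := by
    refine myRatio_tendsto_one (-(Real.log c₃)) (Real.log 2 - Real.log (Real.log b)) ?_ hLLtop
    filter_upwards [hbnds, hTtop.eventually_ge_atTop 1] with x hx hT1
    have hT1R : (1:ℝ) ≤ (Tx x:ℝ) := by exact_mod_cast hT1
    have h7 : Real.log ((Tx x:ℝ)) ≤ Real.log ((Tx x + 1 : ℕ)) := by
      apply Real.log_le_log (by linarith)
      push_cast
      linarith
    have h8 : Real.log ((Tx x + 1 : ℕ)) ≤ Real.log 2 + Real.log (Tx x) := by
      have h9 : ((Tx x + 1 : ℕ):ℝ) ≤ 2 * (Tx x:ℝ) := by push_cast; linarith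
      have h10 : (0:ℝ) < ((Tx x + 1 : ℕ):ℝ) := by push_cast; linarith
      have h11 := Real.log_le_log h10 h9
      rwa [Real.log_mul two_ne_zero (by linarith)] at h11
    constructor <;> linarith [hx.1, hx.2]
  have hlowlim : Tendsto (fun x : ℝ =>
      (G (Tx x) / Real.log (Tx x)) * (Real.log (Tx x) / Real.log (Real.log x)))
      atTop (𝓝 (l * 1)) := (hGlim.comp hTtop).mul hrat1
  have huplim : Tendsto (fun x : ℝ =>
      (G (Tx x + 1) / Real.log ((Tx x + 1 : ℕ))) * (Real.log ((Tx x + 1 : ℕ)) / Real.log (Real.log x)))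
      atTop (𝓝 (l * 1)) := (hGlim'.comp hTtop).mul hrat2
  rw [mul_one] at hlowlim huplim
  have hfinal : Tendsto (fun x : ℝ => Q x / Real.log (Real.log x)) atTop (𝓝 l) := by
    refine tendsto_of_tendsto_of_tendsto_of_le_of_le' hlowlim huplim ?_ ?_
    · filter_upwards [eventually_ge_atTop (S:ℝ), hTtop.eventually_ge_atTop 2,
        hLLtop.eventually_gt_atTop 0] with x hxS hT2 hLL0
      have hT2R : (2:ℝ) ≤ (Tx x:ℝ) := by exact_mod_cast hT2
      have hlogT : 0 < Real.log (Tx x) := Real.log_pos (by linarith)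
      have hcollapse : (G (Tx x) / Real.log (Tx x)) * (Real.log (Tx x) / Real.log (Real.log x))
          = G (Tx x) / Real.log (Real.log x) := by
        rw [div_mul_div_comm, mul_comm (G (Tx x)) (Real.log (Tx x)),
          mul_div_mul_left _ _ (ne_of_gt hlogT)]
      rw [hcollapse]
      exact (div_le_div_iff_of_pos_right hLL0).2 (hlow x hxS)
    · filter_upwards [eventually_ge_atTop (S:ℝ), hTtop.eventually_ge_atTop 2,
        hLLtop.eventually_gt_atTop 0] with x hxS hT2 hLL0
      have hT2R : (2:ℝ) ≤ (Tx x:ℝ) := by exact_mod_cast hT2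
      have hlogT : 0 < Real.log ((Tx x + 1 : ℕ)) := by
        apply Real.log_pos
        push_cast
        linarith
      have hcollapse : (G (Tx x + 1) / Real.log ((Tx x + 1:ℕ)))
          * (Real.log ((Tx x + 1:ℕ)) / Real.log (Real.log x))
          = G (Tx x + 1) / Real.log (Real.log x) := by
        rw [div_mul_div_comm, mul_comm (G (Tx x + 1)) (Real.log ((Tx x + 1:ℕ))),
          mul_div_mul_left _ _ (ne_of_gt hlogT)]
      rw [hcollapse]
      exact (div_le_div_iff_of_pos_right hLL0).2 (hup x hxS)
  have hl_eq : l = δ * Real.logb b (1 + 1/(S:ℝ)) := by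
    rw [hl, Real.log_div_log]
  rw [← hl_eq]
  exact hfinal

/-- Theorem 1.1 of the paper: a logarithmic Benford law for subsets of the prime
ideals of a number field satisfying a Mertens-type asymptotic. -/
theorem benford_for_prime_ideal_subsets
    (K : Type*) [Field K] [NumberField K]
    (A : Set (Ideal (𝓞 K)))
    (hA : ∀ I ∈ A, I.IsPrime ∧ I ≠ ⊥)
    (δ C : ℝ) (hδ : 0 ≤ δ)
    (hsum : (fun x : ℝ =>
        (∑' 𝔭 : {I : Ideal (𝓞 K) // I ∈ A ∧ (Ideal.absNorm I : ℝ) ≤ x},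
          (1 : ℝ) / (Ideal.absNorm 𝔭.1 : ℝ)) - (δ * Real.log (Real.log x) + C))
        =o[atTop] fun x : ℝ => 1 / Real.log x)
    (b S m : ℕ) (hb : 2 ≤ b) (hm : 1 ≤ m)
    (hS₁ : b ^ (m - 1) ≤ S) (hS₂ : S < b ^ m) :
    Tendsto (fun x : ℝ =>
        (∑' 𝔭 : {I : Ideal (𝓞 K) // I ∈ A ∧
            (∃ t : ℕ, S * b ^ t ≤ Ideal.absNorm I ∧ Ideal.absNorm I < (S + 1) * b ^ t) ∧
            (Ideal.absNorm I : ℝ) ≤ x},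
          (1 : ℝ) / (Ideal.absNorm 𝔭.1 : ℝ)) / Real.log (Real.log x))
      atTop (nhds (δ * Real.logb b (1 + 1 / (S : ℝ)))) := by
  have hS : 1 ≤ S := by
    have h1 : 1 ≤ b ^ (m - 1) := Nat.one_le_pow _ _ (by omega)
    omega
  exact myAbstract (fun I : Ideal (𝓞 K) => Ideal.absNorm I) A
    (fun I => (1:ℝ) / (Ideal.absNorm I : ℝ)) (fun I => by positivity)
    (fun n => (Ideal.finite_setOf_absNorm_le n).subset fun I hI => hI.2)
    δ C hsum b S hb hS
end

section
/- Let K be a number field and let A be a set of nonzero prime ideals of the ring of integers of K satisfying ∑_{𝔭 ∈ A, N𝔭 ≤ x} 1/N𝔭 = δ·log log x + C + o(1/log x) as x → ∞ for some real δ ≥ 0 and real C. Let b ≥ 2 and let S be a positive integer with b^{m−1} ≤ S < b^m for some m ≥ 1, and let A_{b,S} = {𝔭 ∈ A : N𝔭 begins with the base-b string S}. Then liminf_{x→∞} (1/log log x) · ∑_{𝔭 ∈ A_{b,S}, N𝔭 ≤ x} 1/N𝔭 ≥ δ·log_b(1 + 1/S). -/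
open Filter Asymptotics Real NumberField

private lemma tsum_set_finite {ι : Type*} {s : Set ι} (hs : s.Finite) (f : ι → ℝ) :
    ∑' (i : s), f i = ∑ i ∈ hs.toFinset, f i := by
  rw [tsum_subtype]
  rw [tsum_eq_sum (s := hs.toFinset) (fun i hi => by
    simp [Set.indicator_of_notMem (by simpa using hi)])]
  exact Finset.sum_congr rfl fun i hi => Set.indicator_of_mem (by simpa using hi) f

private lemma log_step_le {x : ℝ} (hx : 0 < x) :
    Real.log (x + 1) - Real.log x ≤ 1 / x := by
  rw [← Real.log_div (by positivity) (ne_of_gt hx)]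
  have h := Real.log_le_sub_one_of_pos (x := (x+1)/x) (by positivity)
  have : (x + 1) / x - 1 = 1 / x := by field_simp; ring
  linarith [h, this.le]

private lemma le_log_step {x : ℝ} (hx : 0 < x) :
    1 / (x + 1) ≤ Real.log (x + 1) - Real.log x := by
  have h := Real.log_le_sub_one_of_pos (x := x/(x+1)) (by positivity)
  rw [Real.log_div (ne_of_gt hx) (by positivity)] at h
  have : x / (x + 1) - 1 = -(1 / (x+1)) := by field_simp; ring
  linarith [h, this.le]

private lemma sum_inv_ge (a : ℝ) (ha : 1 ≤ a) (n : ℕ) :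
    Real.log (a + n) - Real.log a ≤ ∑ i ∈ Finset.range n, 1 / (a + i) := by
  have := Finset.sum_range_sub (fun i : ℕ => Real.log (a + i)) n
  simp only [Nat.cast_zero, add_zero] at this
  rw [← this]
  refine Finset.sum_le_sum fun i _ => ?_
  have h := log_step_le (x := a + i) (by positivity)
  have e : a + (i + 1 : ℕ) = (a + i) + 1 := by push_cast; ring
  rw [e]; exact h

private lemma sum_inv_le (a : ℝ) (ha : 1 ≤ a) (n : ℕ) :
    ∑ i ∈ Finset.range n, 1 / (a + i + 1) ≤ Real.log (a + n) - Real.log a := by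
  have := Finset.sum_range_sub (fun i : ℕ => Real.log (a + i)) n
  simp only [Nat.cast_zero, add_zero] at this
  rw [← this]
  refine Finset.sum_le_sum fun i _ => ?_
  have h := le_log_step (x := a + i) (by positivity)
  have e : a + (i + 1 : ℕ) = (a + i) + 1 := by push_cast; ring
  rw [e]; exact h

set_option maxHeartbeats 4000000 in
/-- Lower bound: the liminf of the logarithmic density of prime ideals of `A` whose
norms begin with the base-`b` string `S` is at least `δ * log_b (1 + 1/S)`. -/
theorem benford_liminf_lower_bound
    (K : Type*) [Field K] [NumberField K]
    (A : Set (Ideal (𝓞 K)))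
    (hA : ∀ I ∈ A, I.IsPrime ∧ I ≠ ⊥)
    (δ C : ℝ) (hδ : 0 ≤ δ)
    (hsum : (fun x : ℝ =>
        (∑' 𝔭 : {I : Ideal (𝓞 K) // I ∈ A ∧ (Ideal.absNorm I : ℝ) ≤ x},
          (1 : ℝ) / (Ideal.absNorm 𝔭.1 : ℝ)) - (δ * Real.log (Real.log x) + C))
        =o[atTop] fun x : ℝ => 1 / Real.log x)
    (b S m : ℕ) (hb : 2 ≤ b) (hm : 1 ≤ m)
    (hS₁ : b ^ (m - 1) ≤ S) (hS₂ : S < b ^ m) :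
    δ * Real.logb b (1 + 1 / (S : ℝ)) ≤
      Filter.liminf (fun x : ℝ =>
        (∑' 𝔭 : {I : Ideal (𝓞 K) // I ∈ A ∧
            (∃ t : ℕ, S * b ^ t ≤ Ideal.absNorm I ∧ Ideal.absNorm I < (S + 1) * b ^ t) ∧
            (Ideal.absNorm I : ℝ) ≤ x},
          (1 : ℝ) / (Ideal.absNorm 𝔭.1 : ℝ)) / Real.log (Real.log x)) atTop := by
  classical
  -- basic facts
  have hS1 : 1 ≤ S := le_trans (Nat.one_le_pow _ _ (by omega)) hS₁
  have hbR : (1:ℝ) < b := by exact_mod_cast hb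
  have hlogb : 0 < Real.log b := Real.log_pos hbR
  have hlog1S : 0 ≤ Real.log (1 + 1 / (S:ℝ)) := by
    apply Real.log_nonneg
    have : 0 ≤ 1 / (S:ℝ) := by positivity
    linarith
  set f : Ideal (𝓞 K) → ℝ := fun I => (1 : ℝ) / (Ideal.absNorm I : ℝ) with hfdef
  have hf0 : ∀ I, 0 ≤ f I := fun I => by positivity
  have hsfin : ∀ x : ℝ, {I : Ideal (𝓞 K) | I ∈ A ∧ (Ideal.absNorm I : ℝ) ≤ x}.Finite :=
    fun x => (Ideal.finite_setOf_absNorm_le ⌊x⌋₊).subset fun I hI => Nat.le_floor hI.2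
  have hgfin : ∀ x : ℝ, {I : Ideal (𝓞 K) | I ∈ A ∧
      (∃ t : ℕ, S * b ^ t ≤ Ideal.absNorm I ∧ Ideal.absNorm I < (S + 1) * b ^ t) ∧
      (Ideal.absNorm I : ℝ) ≤ x}.Finite :=
    fun x => (hsfin x).subset fun I hI => ⟨hI.1, hI.2.2⟩
  set F : ℝ → ℝ := fun x => ∑ I ∈ (hsfin x).toFinset, f I with hFdef
  set G : ℝ → ℝ := fun x => ∑ I ∈ (hgfin x).toFinset, f I with hGdef
  have e1 : ∀ x : ℝ, (∑' 𝔭 : {I : Ideal (𝓞 K) // I ∈ A ∧ (Ideal.absNorm I : ℝ) ≤ x},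
      (1 : ℝ) / (Ideal.absNorm 𝔭.1 : ℝ)) = F x := fun x => tsum_set_finite (hsfin x) f
  have e2 : ∀ x : ℝ, (∑' 𝔭 : {I : Ideal (𝓞 K) // I ∈ A ∧
      (∃ t : ℕ, S * b ^ t ≤ Ideal.absNorm I ∧ Ideal.absNorm I < (S + 1) * b ^ t) ∧
      (Ideal.absNorm I : ℝ) ≤ x}, (1 : ℝ) / (Ideal.absNorm 𝔭.1 : ℝ)) = G x :=
    fun x => tsum_set_finite (hgfin x) f
  simp only [e1] at hsum
  simp only [e2]
  clear e1 e2
  clear_value F G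
  -- interval endpoints
  set u : ℕ → ℝ := fun t => ((S:ℝ)+1) * (b:ℝ)^t - 1 with hudef
  set v : ℕ → ℝ := fun t => (S:ℝ) * (b:ℝ)^t - 1 with hvdef
  clear_value u v
  have hEfin : ∀ t : ℕ, {I : Ideal (𝓞 K) | I ∈ A ∧ S * b ^ t ≤ Ideal.absNorm I ∧
      Ideal.absNorm I < (S + 1) * b ^ t}.Finite := by
    intro t
    refine (hsfin (u t)).subset fun I hI => ⟨hI.1, ?_⟩
    have h2 : (Ideal.absNorm I : ℝ) + 1 ≤ ((S:ℝ)+1) * (b:ℝ)^t := by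
      have := Nat.succ_le_of_lt hI.2.2
      exact_mod_cast this
    simp only [hudef]; linarith
  have claimA : ∀ t : ℕ, ∑ I ∈ (hEfin t).toFinset, f I = F (u t) - F (v t) := by
    intro t
    have hsub : (hsfin (v t)).toFinset ⊆ (hsfin (u t)).toFinset := by
      intro I hI
      simp only [Set.Finite.mem_toFinset, Set.mem_setOf_eq, hudef, hvdef] at *
      have : (0:ℝ) ≤ (b:ℝ)^t := by positivity
      exact ⟨hI.1, by linarith [hI.2]⟩
    simp only [hFdef]
    rw [← Finset.sum_sdiff_eq_sub hsub]
    congr 1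
    ext I
    simp only [Finset.mem_sdiff, Set.Finite.mem_toFinset, Set.mem_setOf_eq, hudef, hvdef]
    constructor
    · rintro ⟨hIA, h1, h2⟩
      have hb1 : (Ideal.absNorm I : ℝ) + 1 ≤ ((S:ℝ)+1) * (b:ℝ)^t := by
        exact_mod_cast Nat.succ_le_of_lt h2
      have hb2 : (S:ℝ) * (b:ℝ)^t ≤ (Ideal.absNorm I : ℝ) := by exact_mod_cast h1
      exact ⟨⟨hIA, by linarith⟩, fun h => by linarith [h.2]⟩
    · rintro ⟨⟨hIA, h1⟩, h2⟩
      refine ⟨hIA, ?_, ?_⟩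
      · by_contra hlt
        push_neg at hlt
        refine h2 ⟨hIA, ?_⟩
        have : (Ideal.absNorm I : ℝ) + 1 ≤ (S:ℝ) * (b:ℝ)^t := by
          exact_mod_cast Nat.succ_le_of_lt hlt
        linarith
      · have : (Ideal.absNorm I : ℝ) + 1 ≤ ((S:ℝ)+1) * (b:ℝ)^t := by linarith
        have h3 : (Ideal.absNorm I + 1 : ℕ) ≤ (S+1) * b^t := by exact_mod_cast this
        omega
  have claimB : ∀ (t₀ n : ℕ) (x : ℝ), u (t₀ + n) ≤ x →
      ∑ i ∈ Finset.range (n+1), (∑ I ∈ (hEfin (t₀+i)).toFinset, f I) ≤ G x := by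
    intro t₀ n x hx
    have key : ∀ i j : ℕ, i < j →
        Disjoint ((hEfin (t₀+i)).toFinset) ((hEfin (t₀+j)).toFinset) := by
      intro i j hij
      rw [Finset.disjoint_left]
      intro I hI hJ
      simp only [Set.Finite.mem_toFinset, Set.mem_setOf_eq] at hI hJ
      have h1 : (S+1) * b^(t₀+i) ≤ S * b^(t₀+j) := by
        calc (S+1) * b^(t₀+i) ≤ (S*b) * b^(t₀+i) := by
              have : S + 1 ≤ S * b := by nlinarith
              exact Nat.mul_le_mul_right _ this
          _ = S * b^(t₀+i+1) := by ring
          _ ≤ S * b^(t₀+j) := Nat.mul_le_mul_left _ (Nat.pow_le_pow_right (by omega) (by omega))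
      exact absurd (lt_of_lt_of_le hI.2.2 (le_trans h1 hJ.2.1)) (lt_irrefl _).elim
    have hdisj : (↑(Finset.range (n+1)) : Set ℕ).PairwiseDisjoint
        (fun i => (hEfin (t₀+i)).toFinset) := by
      intro i _ j _ hij
      rcases lt_or_gt_of_ne hij with h | h
      · exact key _ _ h
      · exact (key _ _ h).symm
    rw [← Finset.sum_biUnion hdisj]
    simp only [hGdef]
    apply Finset.sum_le_sum_of_subset_of_nonneg
    · intro I hI
      simp only [Finset.mem_biUnion, Finset.mem_range] at hI
      obtain ⟨i, hi, hIi⟩ := hI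
      simp only [Set.Finite.mem_toFinset, Set.mem_setOf_eq] at hIi ⊢
      refine ⟨hIi.1, ⟨t₀+i, hIi.2⟩, ?_⟩
      have h2 : (Ideal.absNorm I : ℝ) + 1 ≤ ((S:ℝ)+1) * (b:ℝ)^(t₀+i) := by
        exact_mod_cast Nat.succ_le_of_lt hIi.2.2
      have h3 : ((b:ℝ))^(t₀+i) ≤ (b:ℝ)^(t₀+n) :=
        pow_le_pow_right₀ (by linarith) (by omega)
      have h4 : ((S:ℝ)+1) * (b:ℝ)^(t₀+i) ≤ ((S:ℝ)+1) * (b:ℝ)^(t₀+n) := by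
        have : (0:ℝ) ≤ (S:ℝ)+1 := by positivity
        exact mul_le_mul_of_nonneg_left h3 this
      simp only [hudef] at hx
      linarith
    · intro I _ _; exact hf0 I
  -- target constant
  set δ' : ℝ := δ * Real.log (1 + 1/(S:ℝ)) / Real.log b with hδ'def
  have hδ'0 : 0 ≤ δ' := by
    rw [hδ'def]; exact div_nonneg (mul_nonneg hδ hlog1S) hlogb.le
  have htarget : δ * Real.logb b (1 + 1/(S:ℝ)) = δ' := by
    rw [hδ'def, Real.logb]; ring
  rw [htarget]
  clear_value δ'
  have hLtend : Tendsto (fun x : ℝ => Real.log (Real.log x)) atTop atTop :=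
    Real.tendsto_log_atTop.comp Real.tendsto_log_atTop
  -- boundedness above
  have hGleF : ∀ x : ℝ, G x ≤ F x := by
    intro x
    simp only [hFdef, hGdef]
    refine Finset.sum_le_sum_of_subset_of_nonneg ?_ (fun I _ _ => hf0 I)
    intro I hI
    simp only [Set.Finite.mem_toFinset, Set.mem_setOf_eq] at *
    exact ⟨hI.1, hI.2.2⟩
  have hbdd : IsBoundedUnder (· ≤ ·) atTop
      (fun x : ℝ => G x / Real.log (Real.log x)) := by
    refine ⟨δ + |C| + 1, ?_⟩
    rw [eventually_map]
    filter_upwards [(isLittleO_iff.mp hsum) one_pos, hLtend.eventually_ge_atTop 1,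
      Real.tendsto_log_atTop.eventually_ge_atTop 1] with x hx hL hlx
    have h3 : ‖(1:ℝ)/Real.log x‖ ≤ 1 := by
      rw [Real.norm_eq_abs, abs_of_nonneg (by positivity)]
      rw [div_le_one (by linarith)]; linarith
    have h2 : F x ≤ δ * Real.log (Real.log x) + C + 1 := by
      have h5 : |F x - (δ * Real.log (Real.log x) + C)| ≤ 1 := by
        calc |F x - (δ * Real.log (Real.log x) + C)| ≤ 1 * ‖(1:ℝ)/Real.log x‖ := by
              simpa [Real.norm_eq_abs] using hx
          _ ≤ 1 := by rw [one_mul]; exact h3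
      linarith [(abs_le.mp h5).2]
    rw [div_le_iff₀ (by linarith : (0:ℝ) < Real.log (Real.log x))]
    have h6 : G x ≤ δ * Real.log (Real.log x) + C + 1 := (hGleF x).trans h2
    linarith [mul_nonneg (abs_nonneg C) (sub_nonneg.2 hL), le_abs_self C,
      mul_nonneg hδ (sub_nonneg.2 hL)]
  -- outer reduction
  refine le_of_forall_lt_imp_le_of_dense fun r hr => ?_
  refine Filter.le_liminf_of_le hbdd.isCoboundedUnder_ge ?_
  -- epsilon setup
  set gap : ℝ := (δ' - r)/2 with hgapdef
  have hgap : 0 < gap := by rw [hgapdef]; linarith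
  set ε : ℝ := gap * Real.log b / 2 with hεdef
  have hε : 0 < ε := by rw [hεdef]; positivity
  have hεgap : 2 * ε / Real.log b = gap := by
    rw [hεdef]; field_simp
  clear_value gap ε
  -- error bound beyond x₀
  obtain ⟨x₀', hx₀'⟩ := eventually_atTop.mp ((isLittleO_iff.mp hsum) hε)
  set x₀ : ℝ := max x₀' 3 with hx₀def
  have hx₀3 : (3:ℝ) ≤ x₀ := le_max_right _ _
  have hx₀m : x₀' ≤ x₀ := le_max_left _ _
  clear_value x₀
  have herr : ∀ y : ℝ, x₀ ≤ y → |F y - (δ * Real.log (Real.log y) + C)| ≤ ε / Real.log y := by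
    intro y hy
    have h3 : (3:ℝ) ≤ y := le_trans hx₀3 hy
    have hlogy : 1 ≤ Real.log y := by
      rw [Real.le_log_iff_exp_le (by linarith)]
      exact le_trans (lt_trans Real.exp_one_lt_d9 (by norm_num)).le h3
    have h4 := hx₀' y (le_trans hx₀m hy)
    rw [Real.norm_eq_abs, Real.norm_eq_abs,
      abs_of_nonneg (by positivity : (0:ℝ) ≤ 1/Real.log y), mul_one_div] at h4
    exact h4
  -- choice of t₀
  obtain ⟨t₁, ht₁⟩ := pow_unbounded_of_one_lt (2*x₀) hbR
  set t₀ : ℕ := max t₁ 3 with ht₀def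
  have ht₀3 : 3 ≤ t₀ := le_max_right _ _
  have hbt₀ : 2*x₀ ≤ (b:ℝ)^t₀ :=
    le_trans ht₁.le (pow_le_pow_right₀ (by linarith) (le_max_left _ _))
  clear_value t₀
  have hSR : (1:ℝ) ≤ S := by exact_mod_cast hS1
  have hSbm : (S:ℝ) + 1 ≤ (b:ℝ)^m := by exact_mod_cast Nat.succ_le_of_lt hS₂
  -- per-term lower bound
  have term_lb : ∀ t : ℕ, t₀ ≤ t →
      δ * Real.log (1+1/(S:ℝ)) / (((t:ℝ)+m) * Real.log b) - 2*ε/(((t:ℝ)-1) * Real.log b)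
        ≤ F (u t) - F (v t) := by
    intro t ht
    have ht3 : 3 ≤ t := le_trans ht₀3 ht
    have htR : (3:ℝ) ≤ (t:ℝ) := by exact_mod_cast ht3
    have hbpos : (0:ℝ) < (b:ℝ)^t := by positivity
    have hb1t : (b:ℝ)^t₀ ≤ (b:ℝ)^t := pow_le_pow_right₀ (by linarith) ht
    have hb2 : (2:ℝ) ≤ (b:ℝ)^t := by
      calc (2:ℝ) ≤ 2*x₀ := by linarith
        _ ≤ (b:ℝ)^t₀ := hbt₀
        _ ≤ (b:ℝ)^t := hb1t
    have hv1 : (b:ℝ)^t/2 ≤ v t := by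
      simp only [hvdef]
      have : (b:ℝ)^t ≤ (S:ℝ)*(b:ℝ)^t := le_mul_of_one_le_left hbpos.le hSR
      linarith
    have hvx₀ : x₀ ≤ v t := by
      have h9 : 2*x₀ ≤ (b:ℝ)^t := le_trans hbt₀ hb1t
      linarith
    have hv3 : (3:ℝ) ≤ v t := le_trans hx₀3 hvx₀
    have hvu : v t ≤ u t := by simp only [hudef, hvdef]; linarith
    have hux₀ : x₀ ≤ u t := le_trans hvx₀ hvu
    have hu3 : (3:ℝ) ≤ u t := le_trans hv3 hvu
    have hlv1 : 1 ≤ Real.log (v t) := by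
      rw [Real.le_log_iff_exp_le (by linarith)]
      exact le_trans (lt_trans Real.exp_one_lt_d9 (by norm_num)).le hv3
    have hlvu : Real.log (v t) ≤ Real.log (u t) := Real.log_le_log (by linarith) hvu
    have hlu1 : 1 ≤ Real.log (u t) := le_trans hlv1 hlvu
    have hlub : Real.log (u t) ≤ ((t:ℝ)+m) * Real.log b := by
      have h1 : u t ≤ (b:ℝ)^(t+m) := by
        have h8 : ((S:ℝ)+1) * (b:ℝ)^t ≤ (b:ℝ)^m * (b:ℝ)^t :=
          mul_le_mul_of_nonneg_right hSbm hbpos.le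
        simp only [hudef]
        rw [pow_add]
        linarith only [h8]
      calc Real.log (u t) ≤ Real.log ((b:ℝ)^(t+m)) := Real.log_le_log (by linarith) h1
        _ = ((t:ℝ)+m) * Real.log b := by rw [Real.log_pow]; push_cast; ring
    have hlvb : ((t:ℝ)-1) * Real.log b ≤ Real.log (v t) := by
      have h1 : Real.log ((b:ℝ)^t/2) ≤ Real.log (v t) := Real.log_le_log (by positivity) hv1
      rw [Real.log_div (by positivity) two_ne_zero, Real.log_pow] at h1
      have h2 : Real.log 2 ≤ Real.log b := Real.log_le_log two_pos (by exact_mod_cast hb)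
      linarith only [h1, h2]
    have hlu0 : (0:ℝ) < Real.log (u t) := by linarith
    have hlv0 : (0:ℝ) < Real.log (v t) := by linarith
    have htm1 : (0:ℝ) < ((t:ℝ)-1) * Real.log b := by
      apply mul_pos (by linarith) hlogb
    have hgaplog : Real.log (1+1/(S:ℝ)) ≤ Real.log (u t) - Real.log (v t) := by
      rw [← Real.log_div (by linarith) (by linarith)]
      have hS1R : (1:ℝ)+1/(S:ℝ) = ((S:ℝ)+1)/(S:ℝ) := by field_simp
      rw [hS1R]
      apply Real.log_le_log (by positivity)
      rw [div_le_div_iff₀ (by linarith) (by linarith)]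
      simp only [hudef, hvdef]
      have hq : (0:ℝ) ≤ 1 := zero_le_one
      linarith only [hq]
    have hLgap : (Real.log (u t) - Real.log (v t)) / Real.log (u t)
        ≤ Real.log (Real.log (u t)) - Real.log (Real.log (v t)) := by
      have h1 := Real.log_le_sub_one_of_pos
        (x := Real.log (v t) / Real.log (u t)) (by positivity)
      rw [Real.log_div (by linarith) (by linarith)] at h1
      have h2 : Real.log (v t)/Real.log (u t) - 1
          = -((Real.log (u t) - Real.log (v t))/Real.log (u t)) := by
        field_simp; ring
      rw [h2] at h1; linarith
    have heu := herr (u t) hux₀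
    have hevv := herr (v t) hvx₀
    have s1a : Real.log (1+1/(S:ℝ)) / (((t:ℝ)+m)*Real.log b)
        ≤ Real.log (1+1/(S:ℝ)) / Real.log (u t) :=
      div_le_div_of_nonneg_left hlog1S hlu0 hlub
    have s1b : Real.log (1+1/(S:ℝ)) / Real.log (u t)
        ≤ (Real.log (u t) - Real.log (v t)) / Real.log (u t) :=
      div_le_div_of_nonneg_right hgaplog hlu0.le
    have s2 : δ * (Real.log (1+1/(S:ℝ)) / (((t:ℝ)+m)*Real.log b))
        ≤ δ * (Real.log (Real.log (u t)) - Real.log (Real.log (v t))) :=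
      mul_le_mul_of_nonneg_left (le_trans (le_trans s1a s1b) hLgap) hδ
    have s3 : ε / Real.log (u t) ≤ ε/(((t:ℝ)-1) * Real.log b) :=
      div_le_div_of_nonneg_left hε.le htm1 (by linarith)
    have s4 : ε / Real.log (v t) ≤ ε/(((t:ℝ)-1) * Real.log b) :=
      div_le_div_of_nonneg_left hε.le htm1 (by linarith)
    have e1' := (abs_le.mp heu).1
    have e2' := (abs_le.mp hevv).2
    have expand : δ * Real.log (1+1/(S:ℝ)) / (((t:ℝ)+m) * Real.log b)
        = δ * (Real.log (1+1/(S:ℝ)) / (((t:ℝ)+m)*Real.log b)) := by ring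
    rw [expand]
    have hsplit : 2 * ε / (((t:ℝ)-1) * Real.log b)
        = ε/(((t:ℝ)-1) * Real.log b) + ε/(((t:ℝ)-1) * Real.log b) := by ring
    linarith only [s2, s3, s4, e1', e2', hsplit]
  -- summation lower bound
  have ht₀R : (3:ℝ) ≤ (t₀:ℝ) := by exact_mod_cast ht₀3
  have hmR : (1:ℝ) ≤ (m:ℝ) := by exact_mod_cast hm
  have hlbne : Real.log b ≠ 0 := ne_of_gt hlogb
  have sum_lb : ∀ n : ℕ,
      δ' * (Real.log ((t₀:ℝ) + m + ((n:ℝ)+1)) - Real.log ((t₀:ℝ) + m))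
        - gap * (Real.log ((t₀:ℝ) - 2 + ((n:ℝ)+1)) - Real.log ((t₀:ℝ) - 2))
      ≤ ∑ i ∈ Finset.range (n+1), (F (u (t₀+i)) - F (v (t₀+i))) := by
    intro n
    have step : ∀ i ∈ Finset.range (n+1),
        δ' * (1/((t₀:ℝ) + m + i)) - gap * (1/((t₀:ℝ) - 2 + i + 1))
          ≤ F (u (t₀+i)) - F (v (t₀+i)) := by
      intro i _
      have h := term_lb (t₀+i) (Nat.le_add_right _ _)
      have hden1 : (0:ℝ) < (t₀:ℝ) + m + i := by
        have : (0:ℝ) ≤ (i:ℝ) := Nat.cast_nonneg i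
        linarith
      have hden2 : (0:ℝ) < (t₀:ℝ) - 2 + i + 1 := by
        have : (0:ℝ) ≤ (i:ℝ) := Nat.cast_nonneg i
        linarith
      have c1 : δ * Real.log (1+1/(S:ℝ)) / ((((t₀+i:ℕ):ℝ)+m) * Real.log b)
          = δ' * (1/((t₀:ℝ) + m + i)) := by
        rw [hδ'def, mul_one_div, div_div]
        congr 1
        push_cast
        ring
      have c2 : 2*ε/((((t₀+i:ℕ):ℝ)-1) * Real.log b)
          = gap * (1/((t₀:ℝ) - 2 + i + 1)) := by
        rw [← hεgap, mul_one_div, div_div]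
        congr 1
        push_cast
        ring
      rw [c1, c2] at h
      exact h
    refine le_trans ?_ (Finset.sum_le_sum step)
    rw [Finset.sum_sub_distrib, ← Finset.mul_sum, ← Finset.mul_sum]
    have hA := sum_inv_ge ((t₀:ℝ) + m) (by linarith) (n+1)
    have hB := sum_inv_le ((t₀:ℝ) - 2) (by linarith) (n+1)
    have hc : ((n+1:ℕ):ℝ) = (n:ℝ)+1 := by push_cast; ring
    rw [hc] at hA hB
    have q1 : δ' * (Real.log ((t₀:ℝ) + m + ((n:ℝ)+1)) - Real.log ((t₀:ℝ)+m))
        ≤ δ' * ∑ i ∈ Finset.range (n+1), 1/((t₀:ℝ)+m+i) :=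
      mul_le_mul_of_nonneg_left hA hδ'0
    have q2 : gap * ∑ i ∈ Finset.range (n+1), 1/((t₀:ℝ)-2+i+1)
        ≤ gap * (Real.log ((t₀:ℝ)-2+((n:ℝ)+1)) - Real.log ((t₀:ℝ)-2)) :=
      mul_le_mul_of_nonneg_left hB hgap.le
    linarith [q1, q2]
  -- limits and eventual facts
  have hlogbt : Tendsto (fun x : ℝ => Real.logb b x) atTop atTop :=
    Real.tendsto_logb_atTop hbR
  have hfloort : Tendsto (fun x : ℝ => ⌊Real.logb b x⌋₊) atTop atTop :=
    tendsto_nat_floor_atTop.comp hlogbt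
  set c₀ : ℝ := Real.log (Real.log b) with hc₀def
  set D : ℝ := gap * (c₀ + Real.log ((t₀:ℝ)-2)) - δ' * (c₀ + Real.log ((t₀:ℝ)+m)) with hDdef
  clear_value c₀ D
  have hDtend : Tendsto (fun x:ℝ => D / Real.log (Real.log x)) atTop (nhds 0) :=
    Tendsto.div_atTop tendsto_const_nhds hLtend
  have he1 : (1:ℝ) < Real.exp 1 := by
    have := Real.exp_one_gt_d9; linarith
  filter_upwards [hfloort.eventually_ge_atTop (m + t₀),
    hlogbt.eventually_ge_atTop 1,
    Real.tendsto_log_atTop.eventually_ge_atTop (Real.exp 1),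
    hDtend.eventually (eventually_ge_nhds (show -gap < (0:ℝ) by linarith)),
    eventually_ge_atTop (1:ℝ)] with x h1 h2 h3 h4 hx1
  have hlogx : 1 < Real.log x := lt_of_lt_of_le he1 h3
  have hLx : 1 ≤ Real.log (Real.log x) := by
    rw [Real.le_log_iff_exp_le (by linarith)]
    exact h3
  have hLxpos : (0:ℝ) < Real.log (Real.log x) := by linarith
  have hlgbx0 : (0:ℝ) ≤ Real.logb b x := by linarith
  obtain ⟨n, hn⟩ : ∃ n : ℕ, m + t₀ + n = ⌊Real.logb b x⌋₊ := ⟨⌊Real.logb b x⌋₊ - (m+t₀), by omega⟩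
  have hxpos : (0:ℝ) < x := by linarith
  have hbNx : (b:ℝ)^(m+t₀+n) ≤ x := by
    have h5 : ((m+t₀+n:ℕ):ℝ) ≤ Real.logb b x := by
      rw [hn]; exact Nat.floor_le hlgbx0
    calc (b:ℝ)^(m+t₀+n) = (b:ℝ)^(((m+t₀+n:ℕ)):ℝ) := by rw [Real.rpow_natCast]
      _ ≤ (b:ℝ)^(Real.logb b x) := Real.rpow_le_rpow_of_exponent_le hbR.le h5
      _ = x := Real.rpow_logb (by linarith) (by linarith) hxpos
  have hcond : u (t₀ + n) ≤ x := by
    simp only [hudef]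
    have h6 : ((S:ℝ)+1) * (b:ℝ)^(t₀+n) ≤ (b:ℝ)^m * (b:ℝ)^(t₀+n) :=
      mul_le_mul_of_nonneg_right hSbm (by positivity)
    have h7 : (b:ℝ)^m * (b:ℝ)^(t₀+n) = (b:ℝ)^(m+t₀+n) := by
      rw [← pow_add, show m + (t₀+n) = m+t₀+n from by omega]
    linarith
  have main : δ' * (Real.log ((t₀:ℝ) + m + ((n:ℝ)+1)) - Real.log ((t₀:ℝ) + m))
      - gap * (Real.log ((t₀:ℝ) - 2 + ((n:ℝ)+1)) - Real.log ((t₀:ℝ) - 2)) ≤ G x := by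
    refine le_trans (sum_lb n) ?_
    have e3 : ∑ i ∈ Finset.range (n+1), (F (u (t₀+i)) - F (v (t₀+i)))
        = ∑ i ∈ Finset.range (n+1), ∑ I ∈ (hEfin (t₀+i)).toFinset, f I :=
      Finset.sum_congr rfl fun i _ => (claimA (t₀+i)).symm
    rw [e3]
    exact claimB t₀ n x hcond
  have hcast : ((m + t₀ + n:ℕ):ℝ) = (m:ℝ) + t₀ + n := by push_cast; ring
  have hA1 : Real.logb b x ≤ (t₀:ℝ) + m + ((n:ℝ)+1) := by
    have h5 : Real.logb b x < ((m+t₀+n:ℕ):ℝ) + 1 := by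
      rw [hn]; exact Nat.lt_floor_add_one _
    rw [hcast] at h5
    linarith
  have hA2 : (t₀:ℝ) - 2 + ((n:ℝ)+1) ≤ Real.logb b x := by
    have h5 : ((m+t₀+n:ℕ):ℝ) ≤ Real.logb b x := by
      rw [hn]; exact Nat.floor_le hlgbx0
    rw [hcast] at h5
    linarith
  have hA3 : Real.log (Real.logb b x) = Real.log (Real.log x) - c₀ := by
    rw [Real.logb, Real.log_div (by linarith : Real.log x ≠ 0) hlbne, hc₀def]
  have hn0 : (0:ℝ) ≤ (n:ℝ) := Nat.cast_nonneg n
  have hB1 : Real.log (Real.log x) - c₀ ≤ Real.log ((t₀:ℝ) + m + ((n:ℝ)+1)) := by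
    rw [← hA3]
    exact Real.log_le_log (by linarith) hA1
  have hB2 : Real.log ((t₀:ℝ) - 2 + ((n:ℝ)+1)) ≤ Real.log (Real.log x) - c₀ := by
    rw [← hA3]
    exact Real.log_le_log (by linarith) hA2
  have q1 : δ' * ((Real.log (Real.log x) - c₀) - Real.log ((t₀:ℝ)+m))
      ≤ δ' * (Real.log ((t₀:ℝ)+m+((n:ℝ)+1)) - Real.log ((t₀:ℝ)+m)) :=
    mul_le_mul_of_nonneg_left (by linarith) hδ'0
  have q2 : gap * (Real.log ((t₀:ℝ)-2+((n:ℝ)+1)) - Real.log ((t₀:ℝ)-2))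
      ≤ gap * ((Real.log (Real.log x) - c₀) - Real.log ((t₀:ℝ)-2)) :=
    mul_le_mul_of_nonneg_left (by linarith) hgap.le
  rw [le_div_iff₀ hLxpos]
  have h8 : -gap * Real.log (Real.log x) ≤ D := by
    have h9 := (le_div_iff₀ hLxpos).mp h4
    linarith
  have h9 : r * Real.log (Real.log x) = (δ' - 2*gap) * Real.log (Real.log x) := by
    rw [show r = δ' - 2*gap from by rw [hgapdef]; ring]
  linarith [main, q1, q2, h8, h9, hDdef.le, hDdef.ge]
end

section
/- Let K be a number field and let A be a set of nonzero prime ideals of the ring of integers of K satisfying ∑_{𝔭 ∈ A, N𝔭 ≤ x} 1/N𝔭 = δ·log log x + C + o(1/log x) as x → ∞ for some real δ ≥ 0 and real C. Let b ≥ 2 and let S be a positive integer with b^{m−1} ≤ S < b^m for some m ≥ 1, and let A_{b,S} = {𝔭 ∈ A : N𝔭 begins with the base-b string S}. Then limsup_{x→∞} (1/log log x) · ∑_{𝔭 ∈ A_{b,S}, N𝔭 ≤ x} 1/N𝔭 ≤ δ·log_b(1 + 1/S). -/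
open Filter Asymptotics Real NumberField Topology

lemma tsum_finite_eq_sum {α : Type*} (f : α → ℝ) {s : Set α} (hs : s.Finite) :
    ∑' x : s, f x = ∑ x ∈ hs.toFinset, f x := by
  classical
  rw [tsum_subtype, tsum_eq_sum (s := hs.toFinset)
    (fun x hx => Set.indicator_of_notMem (fun h => hx (hs.mem_toFinset.mpr h)) f)]
  exact Finset.sum_congr rfl fun x hx => Set.indicator_of_mem (hs.mem_toFinset.mp hx) f

lemma sum_biUnion_le_aux {ι α : Type*} [DecidableEq α] {f : α → ℝ} (hf : ∀ a, 0 ≤ f a)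
    (s : Finset ι) (t : ι → Finset α) :
    ∑ a ∈ s.biUnion t, f a ≤ ∑ i ∈ s, ∑ a ∈ t i, f a := by
  classical
  induction s using Finset.induction with
  | empty => simp
  | @insert a s h ih =>
      rw [Finset.biUnion_insert, Finset.sum_insert h]
      calc ∑ x ∈ t a ∪ s.biUnion t, f x
          ≤ ∑ x ∈ t a, f x + ∑ x ∈ (s.biUnion t) \ t a, f x := by
            rw [← Finset.sum_union (Finset.disjoint_sdiff)]
            apply Finset.sum_le_sum_of_subset_of_nonneg
            · intro x hx
              rcases Finset.mem_union.mp hx with h' | h'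
              · exact Finset.mem_union_left _ h'
              · by_cases hx' : x ∈ t a
                · exact Finset.mem_union_left _ hx'
                · exact Finset.mem_union_right _ (Finset.mem_sdiff.mpr ⟨h', hx'⟩)
            · exact fun x _ _ => hf x
        _ ≤ ∑ x ∈ t a, f x + ∑ x ∈ s.biUnion t, f x := by
            have := Finset.sum_le_sum_of_subset_of_nonneg (Finset.sdiff_subset
              (s := s.biUnion t) (t := t a)) (fun x _ _ => hf x)
            linarith
        _ ≤ _ := by linarith


lemma sum_Ico_inv_le (t₀ T : ℕ) (h : 1 ≤ t₀) :
    ∑ t ∈ Finset.Ico t₀ (T + 1), (1 : ℝ) / t ≤ 1 + Real.log T := by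
  calc ∑ t ∈ Finset.Ico t₀ (T + 1), (1 : ℝ) / t
      ≤ ∑ t ∈ Finset.Icc 1 T, (1 : ℝ) / t := by
        apply Finset.sum_le_sum_of_subset_of_nonneg
        · intro x hx
          rw [Finset.mem_Ico] at hx
          exact Finset.mem_Icc.mpr ⟨le_trans h hx.1, Nat.lt_succ_iff.mp hx.2⟩
        · intro x _ _; positivity
    _ = (harmonic T : ℝ) := by
        rw [harmonic_eq_sum_Icc]
        push_cast
        simp [one_div]
    _ ≤ 1 + Real.log T := harmonic_le_one_add_log T

set_option maxHeartbeats 3000000 in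
/-- Upper bound: the limsup of the logarithmic density of prime ideals of `A` whose
norms begin with the base-`b` string `S` is at most `δ * log_b (1 + 1/S)`. -/
theorem benford_limsup_upper_bound
    (K : Type*) [Field K] [NumberField K]
    (A : Set (Ideal (𝓞 K)))
    (hA : ∀ I ∈ A, I.IsPrime ∧ I ≠ ⊥)
    (δ C : ℝ) (hδ : 0 ≤ δ)
    (hsum : (fun x : ℝ =>
        (∑' 𝔭 : {I : Ideal (𝓞 K) // I ∈ A ∧ (Ideal.absNorm I : ℝ) ≤ x},
          (1 : ℝ) / (Ideal.absNorm 𝔭.1 : ℝ)) - (δ * Real.log (Real.log x) + C))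
        =o[atTop] fun x : ℝ => 1 / Real.log x)
    (b S m : ℕ) (hb : 2 ≤ b) (hm : 1 ≤ m)
    (hS₁ : b ^ (m - 1) ≤ S) (hS₂ : S < b ^ m) :
    Filter.limsup (fun x : ℝ =>
        (∑' 𝔭 : {I : Ideal (𝓞 K) // I ∈ A ∧
            (∃ t : ℕ, S * b ^ t ≤ Ideal.absNorm I ∧ Ideal.absNorm I < (S + 1) * b ^ t) ∧
            (Ideal.absNorm I : ℝ) ≤ x},
          (1 : ℝ) / (Ideal.absNorm 𝔭.1 : ℝ)) / Real.log (Real.log x)) atTop ≤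
      δ * Real.logb b (1 + 1 / (S : ℝ)) := by
  classical
  -- numerics
  have hb1 : (1 : ℝ) < b := by exact_mod_cast hb.trans_lt' one_lt_two
  have hS1 : 1 ≤ S := le_trans (Nat.one_le_pow _ _ (by omega)) hS₁
  have hSR : (1 : ℝ) ≤ (S : ℝ) := by exact_mod_cast hS1
  have hSpos : (0 : ℝ) < S := by linarith
  have hlogb : 0 < Real.log b := Real.log_pos hb1
  set c : ℝ := Real.logb b (1 + 1 / (S : ℝ)) with hc
  have hc0 : 0 ≤ c := Real.logb_nonneg hb1 (by
    have : (0:ℝ) ≤ 1 / (S:ℝ) := by positivity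
    linarith)
  set g : Ideal (𝓞 K) → ℝ := fun I => (1 : ℝ) / (Ideal.absNorm I : ℝ) with hgdef
  have hg0 : ∀ I, 0 ≤ g I := fun I => by positivity
  -- finiteness of the sets
  have Afin : ∀ y : ℝ, {I : Ideal (𝓞 K) | I ∈ A ∧ (Ideal.absNorm I : ℝ) ≤ y}.Finite := by
    intro y
    refine (Ideal.finite_setOf_absNorm_le ⌊y⌋₊).subset ?_
    rintro I ⟨-, hle⟩
    exact Nat.le_floor hle
  have Gfin : ∀ x : ℝ, {I : Ideal (𝓞 K) | I ∈ A ∧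
      (∃ t : ℕ, S * b ^ t ≤ Ideal.absNorm I ∧ Ideal.absNorm I < (S + 1) * b ^ t) ∧
      (Ideal.absNorm I : ℝ) ≤ x}.Finite := by
    intro x
    refine (Ideal.finite_setOf_absNorm_le ⌊x⌋₊).subset ?_
    rintro I ⟨-, -, hle⟩
    exact Nat.le_floor hle
  set F : ℝ → ℝ := fun y => ∑ I ∈ (Afin y).toFinset, g I with hFdef
  have hFtsum : ∀ y : ℝ,
      (∑' 𝔭 : {I : Ideal (𝓞 K) // I ∈ A ∧ (Ideal.absNorm I : ℝ) ≤ y},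
        (1 : ℝ) / (Ideal.absNorm 𝔭.1 : ℝ)) = F y := fun y =>
    tsum_finite_eq_sum g (Afin y)
  have hGtsum : ∀ x : ℝ,
      (∑' 𝔭 : {I : Ideal (𝓞 K) // I ∈ A ∧
          (∃ t : ℕ, S * b ^ t ≤ Ideal.absNorm I ∧ Ideal.absNorm I < (S + 1) * b ^ t) ∧
          (Ideal.absNorm I : ℝ) ≤ x},
        (1 : ℝ) / (Ideal.absNorm 𝔭.1 : ℝ)) = ∑ I ∈ (Gfin x).toFinset, g I := fun x =>
    tsum_finite_eq_sum g (Gfin x)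
  set E : ℝ → ℝ := fun y => F y - (δ * Real.log (Real.log y) + C) with hEdef
  have hE : E =o[atTop] fun y : ℝ => 1 / Real.log y := by
    refine hsum.congr' ?_ EventuallyEq.rfl
    exact Eventually.of_forall fun y => by rw [hEdef]; simp only [hFtsum]
  have hFmono : ∀ {y z : ℝ}, y ≤ z → F y ≤ F z := by
    intro y z hyz
    apply Finset.sum_le_sum_of_subset_of_nonneg ?_ fun i _ _ => hg0 i
    intro I hI
    rw [Set.Finite.mem_toFinset] at hI ⊢
    exact ⟨hI.1, hI.2.trans hyz⟩
  set u : ℕ → ℝ := fun t => ((S : ℝ) + 1) * (b : ℝ) ^ t with hudef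
  set l : ℕ → ℝ := fun t => (S : ℝ) * (b : ℝ) ^ t - 1 with hldef
  have hbtpos : ∀ t : ℕ, (0 : ℝ) < (b : ℝ) ^ t := fun t => by positivity
  have hlu : ∀ t, l t ≤ u t := by
    intro t
    have := hbtpos t
    simp only [hudef, hldef]
    nlinarith
  set φ : ℕ → ℝ := fun t => F (u t) - F (l t) with hφdef
  have hφ0 : ∀ t, 0 ≤ φ t := fun t => sub_nonneg.mpr (hFmono (hlu t))
  -- step 1 : bound the restricted sum by  ∑ φ
  have hGbound : ∀ x : ℝ, 1 ≤ x →
      ∑ I ∈ (Gfin x).toFinset, g I ≤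
        ∑ t ∈ Finset.range (⌊Real.logb b x⌋₊ + 1), φ t := by
    intro x hx1
    set T : ℕ := ⌊Real.logb b x⌋₊ with hTdef
    have hsub : (Gfin x).toFinset ⊆ (Finset.range (T + 1)).biUnion
        (fun t => (Afin (u t)).toFinset \ (Afin (l t)).toFinset) := by
      intro I hI
      rw [Set.Finite.mem_toFinset] at hI
      obtain ⟨hIA, ⟨t, ht1, ht2⟩, hxle⟩ := hI
      rw [Finset.mem_biUnion]
      refine ⟨t, ?_, ?_⟩
      · rw [Finset.mem_range, Nat.lt_succ_iff, hTdef]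
        apply Nat.le_floor
        have hbx : ((b : ℝ)) ^ t ≤ x := by
          have h1 : (b : ℕ) ^ t ≤ S * b ^ t := Nat.le_mul_of_pos_left _ (by omega)
          have h2 : ((S * b ^ t : ℕ) : ℝ) ≤ (Ideal.absNorm I : ℝ) := by exact_mod_cast ht1
          have h3 : ((b ^ t : ℕ) : ℝ) ≤ ((S * b ^ t : ℕ) : ℝ) := by exact_mod_cast h1
          push_cast at h2 h3 ⊢
          linarith
        have hlog : (t : ℝ) * Real.log b ≤ Real.log x := by
          calc (t : ℝ) * Real.log b = Real.log ((b : ℝ) ^ t) := (by rw [Real.log_pow])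
            _ ≤ Real.log x := Real.log_le_log (hbtpos t) hbx
        rw [Real.logb, le_div_iff₀ hlogb]
        linarith
      · rw [Finset.mem_sdiff, Set.Finite.mem_toFinset, Set.Finite.mem_toFinset]
        constructor
        · refine ⟨hIA, ?_⟩
          have : ((Ideal.absNorm I : ℕ) : ℝ) ≤ (((S + 1) * b ^ t : ℕ) : ℝ) := by
            exact_mod_cast ht2.le
          push_cast at this ⊢
          simp only [hudef]
          linarith
        · rintro ⟨-, hle⟩
          have : (((S * b ^ t : ℕ)) : ℝ) ≤ (Ideal.absNorm I : ℝ) := by exact_mod_cast ht1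
          push_cast at this
          simp only [hldef] at hle
          linarith
    calc ∑ I ∈ (Gfin x).toFinset, g I
        ≤ ∑ I ∈ (Finset.range (T + 1)).biUnion
            (fun t => (Afin (u t)).toFinset \ (Afin (l t)).toFinset), g I :=
          Finset.sum_le_sum_of_subset_of_nonneg hsub fun i _ _ => hg0 i
      _ ≤ ∑ t ∈ Finset.range (T + 1), ∑ I ∈ (Afin (u t)).toFinset \ (Afin (l t)).toFinset, g I :=
          sum_biUnion_le_aux hg0 _ _
      _ = ∑ t ∈ Finset.range (T + 1), φ t := by
          refine Finset.sum_congr rfl fun t _ => ?_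
          rw [Finset.sum_sdiff_eq_sub, hφdef]
          intro I hI
          rw [Set.Finite.mem_toFinset] at hI ⊢
          exact ⟨hI.1, hI.2.trans (hlu t)⟩
  clear_value φ E F u l g c
  -- step 2 : per-term asymptotic bound
  have hterm : ∀ ε : ℝ, 0 < ε → ∀ᶠ t : ℕ in atTop, φ t ≤ (δ * c + ε) / t := by
    intro ε hε
    obtain ⟨ε₁, hε₁def⟩ : ∃ ε₁ : ℝ, ε₁ = ε / (δ + 1) := ⟨_, rfl⟩
    have hε₁ : 0 < ε₁ := by rw [hε₁def]; positivity
    obtain ⟨M, hMdef⟩ : ∃ M : ℝ, M = 1 / Real.log b + 1 := ⟨_, rfl⟩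
    have hM : 0 < M := by rw [hMdef]; positivity
    obtain ⟨ε₂, hε₂def⟩ : ∃ ε₂ : ℝ, ε₂ = ε₁ / (2 * M) := ⟨_, rfl⟩
    have hε₂ : 0 < ε₂ := by rw [hε₂def]; positivity
    have hε₂M : 2 * (ε₂ * M) = ε₁ := by rw [hε₂def]; field_simp
    obtain ⟨y₀, hy₀⟩ := eventually_atTop.mp (hE.def hε₂)
    have hbne : (b : ℝ) ≠ 0 := by positivity
    obtain ⟨r, hrdef⟩ : ∃ r : ℕ → ℝ, r = fun t : ℕ => (1 / (b : ℝ)) ^ t := ⟨_, rfl⟩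
    have hr : Tendsto r atTop (𝓝 0) := by
      rw [hrdef]
      exact tendsto_pow_atTop_nhds_zero_of_lt_one (by positivity)
        (by rw [div_lt_one (by linarith)]; linarith)
    have hrb : ∀ t, r t * (b : ℝ) ^ t = 1 := by
      intro t
      rw [hrdef]
      rw [← mul_pow, one_div_mul_cancel hbne, one_pow]
    have hlval : ∀ t, l t = ((S : ℝ) - r t) * (b : ℝ) ^ t := by
      intro t
      have := hrb t
      simp only [hldef]
      nlinarith
    have hudivl : ∀ t, u t / l t = ((S : ℝ) + 1) / ((S : ℝ) - r t) := by
      intro t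
      rw [hlval t]
      simp only [hudef]
      exact mul_div_mul_right _ _ (ne_of_gt (hbtpos t))
    have hSr : Tendsto (fun t : ℕ => (S : ℝ) - r t) atTop (𝓝 (S : ℝ)) := by
      simpa using tendsto_const_nhds.sub hr
    have hlim1 : Tendsto (fun t : ℕ => Real.log (u t / l t)) atTop
        (𝓝 (Real.log (((S : ℝ) + 1) / S))) := by
      have h1 : Tendsto (fun t : ℕ => ((S : ℝ) + 1) / ((S : ℝ) - r t)) atTop
          (𝓝 (((S : ℝ) + 1) / S)) := tendsto_const_nhds.div hSr (ne_of_gt hSpos)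
      have h2 : ContinuousAt Real.log (((S : ℝ) + 1) / S) :=
        Real.continuousAt_log (by positivity)
      exact (h2.tendsto.comp h1).congr fun t => by rw [Function.comp_apply, ← hudivl t]
    have hloglt : Tendsto (fun t : ℕ => Real.log (l t) / t) atTop (𝓝 (Real.log b)) := by
      have hgS : Tendsto (fun t : ℕ => Real.log ((S : ℝ) - r t)) atTop (𝓝 (Real.log S)) :=
        ((Real.continuousAt_log (ne_of_gt hSpos)).tendsto.comp hSr)
      have hz : Tendsto (fun t : ℕ => Real.log ((S : ℝ) - r t) / t) atTop (𝓝 0) :=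
        hgS.div_atTop tendsto_natCast_atTop_atTop
      have hpos : ∀ᶠ t : ℕ in atTop, (0 : ℝ) < (S : ℝ) - r t :=
        hSr.eventually_const_lt (by linarith)
      have hmain : Tendsto (fun t : ℕ => Real.log ((S : ℝ) - r t) / t + Real.log b) atTop
          (𝓝 (Real.log b)) := by simpa using hz.add tendsto_const_nhds
      refine Tendsto.congr' ?_ hmain
      filter_upwards [hpos, eventually_ge_atTop 1] with t hpos' ht1
      have htne : (t : ℝ) ≠ 0 := by
        have : (1 : ℝ) ≤ (t : ℝ) := by exact_mod_cast ht1
        linarith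
      rw [hlval t, Real.log_mul (ne_of_gt hpos') (ne_of_gt (hbtpos t)), Real.log_pow]
      field_simp
    have hlim2 : Tendsto (fun t : ℕ => (t : ℝ) / Real.log (l t)) atTop
        (𝓝 (1 / Real.log b)) := by
      have h := hloglt.inv₀ (ne_of_gt hlogb)
      have heq : (fun t : ℕ => (Real.log (l t) / t)⁻¹) = fun t : ℕ => (t : ℝ) / Real.log (l t) :=
        funext fun t => by rw [inv_div]
      rw [heq] at h
      simpa [one_div] using h
    have hψ : Tendsto (fun t : ℕ => Real.log (u t / l t) * ((t : ℝ) / Real.log (l t))) atTop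
        (𝓝 (c + 0)) := by
      have h := hlim1.mul hlim2
      have hval : Real.log (((S : ℝ) + 1) / S) * (1 / Real.log b) = c + 0 := by
        rw [hc, Real.logb, show ((S : ℝ) + 1) / S = 1 + 1 / (S : ℝ) by field_simp]
        ring
      rwa [hval] at h
    have hltop : Tendsto l atTop atTop := by
      have hb' : Tendsto (fun t : ℕ => (b : ℝ) ^ t) atTop atTop :=
        tendsto_pow_atTop_atTop_of_one_lt hb1
      have h2 : Tendsto (fun t : ℕ => (S : ℝ) * (b : ℝ) ^ t) atTop atTop :=
        hb'.const_mul_atTop hSpos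
      have h3 := tendsto_atTop_add_const_right atTop (-1 : ℝ) h2
      refine h3.congr fun t => ?_
      simp only [hldef]
      ring
    filter_upwards [hψ.eventually_le_const (by linarith : c + 0 < c + ε₁),
      hlim2.eventually_lt_const (by rw [hMdef]; linarith : 1 / Real.log b < M),
      hltop.eventually_ge_atTop (max y₀ 3), eventually_ge_atTop 1] with t hψt hMt hlt ht1
    have hl3 : (3 : ℝ) ≤ l t := le_trans (le_max_right _ _) hlt
    have hly₀ : y₀ ≤ l t := le_trans (le_max_left _ _) hlt
    have hl1 : (1 : ℝ) < l t := by linarith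
    have hl0 : (0 : ℝ) < l t := by linarith
    have hu0 : (0 : ℝ) < u t := lt_of_lt_of_le hl0 (hlu t)
    have huy₀ : y₀ ≤ u t := le_trans hly₀ (hlu t)
    have hlogl : 0 < Real.log (l t) := Real.log_pos hl1
    have hlogu : 0 < Real.log (u t) := Real.log_pos (lt_of_lt_of_le hl1 (hlu t))
    have ht0 : (0 : ℝ) < (t : ℝ) := by exact_mod_cast Nat.lt_of_lt_of_le Nat.zero_lt_one ht1
    have hlogle : Real.log (l t) ≤ Real.log (u t) := Real.log_le_log hl0 (hlu t)
    -- E bounds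
    have hEbound : ∀ y : ℝ, y₀ ≤ y → Real.log (l t) ≤ Real.log y → |E y| ≤ ε₂ * M / t := by
      intro y hy hylog
      have h := hy₀ y hy
      rw [Real.norm_eq_abs, Real.norm_eq_abs,
        abs_of_pos (show (0 : ℝ) < 1 / Real.log y by
          have : 0 < Real.log y := lt_of_lt_of_le hlogl hylog
          positivity)] at h
      have hlogy : 0 < Real.log y := lt_of_lt_of_le hlogl hylog
      calc |E y| ≤ ε₂ * (1 / Real.log y) := h
        _ ≤ ε₂ * (1 / Real.log (l t)) := by gcongr
        _ = ε₂ * (((t : ℝ) / Real.log (l t)) / t) := by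
            congr 1
            rw [div_div, mul_comm (Real.log (l t)) ((t : ℝ)), ← div_div, div_self ht0.ne']
        _ ≤ ε₂ * (M / t) := by gcongr
        _ = ε₂ * M / t := by ring
    have hEl : |E (l t)| ≤ ε₂ * M / t := hEbound _ hly₀ le_rfl
    have hEu : |E (u t)| ≤ ε₂ * M / t := hEbound _ huy₀ hlogle
    -- main term
    have hmain : Real.log (Real.log (u t)) - Real.log (Real.log (l t)) ≤ (c + ε₁) / t := by
      have h1 : Real.log (Real.log (u t)) - Real.log (Real.log (l t))
          = Real.log (Real.log (u t) / Real.log (l t)) :=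
        (Real.log_div hlogu.ne' hlogl.ne').symm
      have h2 : Real.log (Real.log (u t) / Real.log (l t))
          ≤ Real.log (u t) / Real.log (l t) - 1 :=
        Real.log_le_sub_one_of_pos (by positivity)
      have h3 : Real.log (u t) / Real.log (l t) - 1
          = Real.log (u t / l t) / Real.log (l t) := by
        rw [Real.log_div hu0.ne' hl0.ne']
        field_simp
      have h4 : Real.log (u t / l t) / Real.log (l t)
          = Real.log (u t / l t) * ((t : ℝ) / Real.log (l t)) / t := by
        field_simp
      have h5 : Real.log (u t / l t) * ((t : ℝ) / Real.log (l t)) / t ≤ (c + ε₁) / t := by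
        gcongr
      linarith
    have hφt : φ t = δ * (Real.log (Real.log (u t)) - Real.log (Real.log (l t)))
        + (E (u t) - E (l t)) := by
      simp only [hφdef, hEdef]
      ring
    have hEu' : E (u t) ≤ ε₂ * M / t := le_trans (le_abs_self _) hEu
    have hEl' : -(ε₂ * M / t) ≤ E (l t) := neg_le_of_abs_le hEl
    have hεsum : δ * ε₁ + 2 * (ε₂ * M) = ε := by
      rw [hε₂M, hε₁def]
      field_simp
    calc φ t ≤ δ * ((c + ε₁) / t) + (ε₂ * M / t + ε₂ * M / t) := by
          rw [hφt]
          have := mul_le_mul_of_nonneg_left hmain hδ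
          linarith
      _ = (δ * c + (δ * ε₁ + 2 * (ε₂ * M))) / t := by
          field_simp
          ring
      _ = (δ * c + ε) / t := by rw [hεsum]
  -- step 3 : assembly
  refine le_of_forall_pos_le_add fun ε hε => ?_
  obtain ⟨t₀', ht₀'⟩ := eventually_atTop.mp (hterm (ε / 2) (by positivity))
  set t₀ : ℕ := max t₀' 1 with ht₀def
  have ht₀1 : 1 ≤ t₀ := le_max_right _ _
  obtain ⟨B, hBdef⟩ : ∃ B : ℝ, B = ∑ t ∈ Finset.range t₀, φ t := ⟨_, rfl⟩
  obtain ⟨B', hB'def⟩ : ∃ B' : ℝ,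
    B' = B + (δ * c + ε / 2) * (1 - Real.log (Real.log b)) := ⟨_, rfl⟩
  have hδc : 0 ≤ δ * c + ε / 2 := by positivity
  have hev : ∀ᶠ x : ℝ in atTop,
      (∑' 𝔭 : {I : Ideal (𝓞 K) // I ∈ A ∧
          (∃ t : ℕ, S * b ^ t ≤ Ideal.absNorm I ∧ Ideal.absNorm I < (S + 1) * b ^ t) ∧
          (Ideal.absNorm I : ℝ) ≤ x},
        (1 : ℝ) / (Ideal.absNorm 𝔭.1 : ℝ)) / Real.log (Real.log x) ≤
      δ * c + ε := by
    have hloglog : Tendsto (fun x : ℝ => Real.log (Real.log x)) atTop atTop :=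
      Real.tendsto_log_atTop.comp Real.tendsto_log_atTop
    filter_upwards [eventually_ge_atTop ((b : ℝ) ^ t₀), eventually_ge_atTop (b : ℝ),
      hloglog.eventually_ge_atTop (max 1 (2 * |B'| / ε + 1))] with x h1 h2 h3
    have hx1 : (1 : ℝ) < x := lt_of_lt_of_le hb1 h2
    have hlogx : 0 < Real.log x := Real.log_pos hx1
    set L : ℝ := Real.log (Real.log x) with hLdef
    have hL1 : 1 ≤ L := le_trans (le_max_left _ _) h3
    have hL0 : 0 < L := by linarith
    set T : ℕ := ⌊Real.logb b x⌋₊ with hTdef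
    have hlogbx_t₀ : (t₀ : ℝ) ≤ Real.logb b x := by
      have hlog : (t₀ : ℝ) * Real.log b ≤ Real.log x := by
        calc (t₀ : ℝ) * Real.log b = Real.log ((b : ℝ) ^ t₀) := (by rw [Real.log_pow])
          _ ≤ Real.log x := Real.log_le_log (hbtpos t₀) h1
      rw [Real.logb, le_div_iff₀ hlogb]
      linarith
    have hTt₀ : t₀ ≤ T := Nat.le_floor hlogbx_t₀
    have hT1 : 0 < T := lt_of_lt_of_le ht₀1 hTt₀
    have hTreal : (T : ℝ) ≤ Real.logb b x := Nat.floor_le (Real.logb_nonneg hb1 hx1.le)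
    have hlogT : Real.log T ≤ L - Real.log (Real.log b) := by
      calc Real.log T ≤ Real.log (Real.logb b x) :=
            Real.log_le_log (by exact_mod_cast hT1) hTreal
        _ = L - Real.log (Real.log b) := by
            rw [Real.logb, Real.log_div hlogx.ne' hlogb.ne']
    have hsum1 : ∑ I ∈ (Gfin x).toFinset, g I ≤ ∑ t ∈ Finset.range (T + 1), φ t :=
      hGbound x hx1.le
    have hsplit : ∑ t ∈ Finset.range (T + 1), φ t
        = B + ∑ t ∈ Finset.Ico t₀ (T + 1), φ t := by
      rw [hBdef, Finset.range_eq_Ico,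
        ← Finset.sum_Ico_consecutive _ (Nat.zero_le t₀) (by omega : t₀ ≤ T + 1), ← Finset.range_eq_Ico]
    have hbound2 : ∑ t ∈ Finset.Ico t₀ (T + 1), φ t
        ≤ (δ * c + ε / 2) * ∑ t ∈ Finset.Ico t₀ (T + 1), (1 : ℝ) / t := by
      rw [Finset.mul_sum]
      refine Finset.sum_le_sum fun t ht => ?_
      have h := ht₀' t (le_trans (le_max_left _ _) (Finset.mem_Ico.mp ht).1)
      calc φ t ≤ (δ * c + ε / 2) / t := h
        _ = (δ * c + ε / 2) * (1 / t) := by rw [mul_one_div]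
    have hharm : ∑ t ∈ Finset.Ico t₀ (T + 1), (1 : ℝ) / t ≤ 1 + Real.log T :=
      sum_Ico_inv_le t₀ T ht₀1
    have hfinal : ∑ I ∈ (Gfin x).toFinset, g I ≤ B' + (δ * c + ε / 2) * L := by
      have step : (δ * c + ε / 2) * ∑ t ∈ Finset.Ico t₀ (T + 1), (1 : ℝ) / t
          ≤ (δ * c + ε / 2) * (1 + (L - Real.log (Real.log b))) := by
        apply mul_le_mul_of_nonneg_left _ hδc
        linarith
      have expand : B + (δ * c + ε / 2) * (1 + (L - Real.log (Real.log b)))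
          = B' + (δ * c + ε / 2) * L := by rw [hB'def]; ring
      linarith
    have hB'L : B' / L ≤ ε / 2 := by
      have h2L : 2 * |B'| / ε + 1 ≤ L := le_trans (le_max_right _ _) h3
      have habs : B' ≤ |B'| := le_abs_self B'
      rw [div_le_iff₀ hL0]
      have hmul := mul_le_mul_of_nonneg_left h2L (le_of_lt (half_pos hε))
      have heq : ε / 2 * (2 * |B'| / ε + 1) = |B'| + ε / 2 := by
        field_simp
      linarith
    rw [hGtsum x]
    calc (∑ I ∈ (Gfin x).toFinset, g I) / L ≤ (B' + (δ * c + ε / 2) * L) / L := by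
          gcongr
      _ = B' / L + (δ * c + ε / 2) := by
          rw [add_div, mul_div_assoc, div_self hL0.ne', mul_one]
      _ ≤ δ * c + ε := by linarith
  have hpos : ∀ᶠ x : ℝ in atTop,
      (0:ℝ) ≤ (∑' 𝔭 : {I : Ideal (𝓞 K) // I ∈ A ∧
          (∃ t : ℕ, S * b ^ t ≤ Ideal.absNorm I ∧ Ideal.absNorm I < (S + 1) * b ^ t) ∧
          (Ideal.absNorm I : ℝ) ≤ x},
        (1 : ℝ) / (Ideal.absNorm 𝔭.1 : ℝ)) / Real.log (Real.log x) := by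
    have hloglog : Tendsto (fun x : ℝ => Real.log (Real.log x)) atTop atTop :=
      Real.tendsto_log_atTop.comp Real.tendsto_log_atTop
    filter_upwards [hloglog.eventually_ge_atTop 1] with x hx
    exact div_nonneg (tsum_nonneg fun 𝔭 => by positivity) (by linarith)
  exact limsup_le_of_le (IsCoboundedUnder.of_frequently_ge hpos.frequently) hev
end

section
/- Let K be a number field, let A be a set of nonzero prime ideals of the ring of integers of K, and let δ ≥ 0 be real. Suppose #{𝔭 ∈ A : N𝔭 ≤ x} = δ·Li(x) + o(x/(log x)^2) as x → ∞. Then there exists a real constant C such that ∑_{𝔭 ∈ A, N𝔭 ≤ x} 1/N𝔭 = δ·log log x + C + o(1/log x) as x → ∞. -/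
open Filter Asymptotics Real NumberField
open MeasureTheory Set Topology



private lemma mertens_aux (c : ℕ → ℝ) (hc : ∀ n, 0 ≤ c n) (hc0 : c 0 = 0) (hc1 : c 1 = 0)
    (δ : ℝ) (hδ : 0 ≤ δ)
    (hcount : (fun x : ℝ => (∑ k ∈ Finset.Icc 0 ⌊x⌋₊, c k) -
        δ * ∫ t in (2 : ℝ)..x, 1 / Real.log t)
      =o[atTop] fun x : ℝ => x / (Real.log x) ^ 2) :
    ∃ C : ℝ, (fun x : ℝ =>
        (∑ k ∈ Finset.Icc 0 ⌊x⌋₊, (k : ℝ)⁻¹ * c k) - (δ * Real.log (Real.log x) + C))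
      =o[atTop] fun x : ℝ => 1 / Real.log x := by
  classical
  set Li : ℝ → ℝ := fun x => ∫ t in (2 : ℝ)..x, 1 / Real.log t with hLidef
  set P : ℝ → ℝ := fun t => ∑ k ∈ Finset.Icc 0 ⌊t⌋₊, c k with hPdef
  set E : ℝ → ℝ := fun t => P t - δ * Li t with hEdef
  have hcount' : E =o[atTop] fun x : ℝ => x / (Real.log x) ^ 2 := hcount
  -- measurability of P
  have hPmeas : Measurable P :=
    Measurable.comp (g := fun n : ℕ => ∑ k ∈ Finset.Icc 0 n, c k)
      measurable_from_top Nat.measurable_floor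
  have hPmono : Monotone P := fun s t h =>
    Finset.sum_le_sum_of_subset_of_nonneg
      (Finset.Icc_subset_Icc_right (Nat.floor_le_floor h)) (fun i _ _ => hc i)
  have hPnonneg : ∀ t, 0 ≤ P t := fun t => Finset.sum_nonneg fun i _ => hc i
  have hlogpos : ∀ t : ℝ, 2 ≤ t → 0 < Real.log t := fun t ht =>
    Real.log_pos (by linarith)
  -- derivative of Li
  have hLideriv : ∀ t : ℝ, 2 ≤ t → HasDerivAt Li (1 / Real.log t) t := by
    intro t ht
    have hne : Real.log t ≠ 0 := (hlogpos t ht).ne'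
    have hcontAt : ContinuousAt (fun s => 1 / Real.log s) t :=
      continuousAt_const.div (Real.continuousAt_log (by linarith)) hne
    refine intervalIntegral.integral_hasDerivAt_right ?_ ?_ hcontAt
    · refine (ContinuousOn.intervalIntegrable ?_)
      intro s hs
      rw [Set.uIcc_of_le ht] at hs
      exact (continuousAt_const.div (Real.continuousAt_log (by linarith [hs.1]))
        (hlogpos s hs.1).ne').continuousWithinAt
    · exact (measurable_const.div
        Real.measurable_log).aestronglyMeasurable.stronglyMeasurableAtFilter
  have hLicontAt : ∀ t : ℝ, 2 ≤ t → ContinuousAt Li t := fun t ht =>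
    (hLideriv t ht).continuousAt
  have hLicontOn : ∀ s : Set ℝ, s ⊆ Set.Ici 2 → ContinuousOn Li s := fun s hs t ht =>
    (hLicontAt t (hs ht)).continuousWithinAt
  have hIcc02 : (Finset.Icc 0 2 : Finset ℕ) = {0, 1, 2} := by decide
  -- Abel summation
  have habel : ∀ b : ℝ, 2 ≤ b →
      ∑ k ∈ Finset.Icc 0 ⌊b⌋₊, (k : ℝ)⁻¹ * c k
        = b⁻¹ * P b + ∫ t in Set.Ioc 2 b, (t ^ 2)⁻¹ * P t := by
    intro b hb
    have hfl2 : ⌊(2 : ℝ)⌋₊ = 2 := by norm_num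
    have hderiv_eq : deriv (fun t : ℝ => t⁻¹) = fun t : ℝ => -((t ^ 2)⁻¹) := by
      funext t; exact deriv_inv
    have h := sum_mul_eq_sub_sub_integral_mul (c := c) (f := fun t : ℝ => t⁻¹)
      (a := 2) (b := b) (by norm_num) hb
      (fun t ht => differentiableAt_inv (by rw [Set.mem_Icc] at ht; intro h0; rw [h0] at ht; linarith [ht.1]))
      (by
        rw [hderiv_eq]
        refine (ContinuousOn.integrableOn_Icc ?_)
        refine ContinuousOn.neg (ContinuousOn.inv₀ (by fun_prop) ?_)
        intro t ht
        rw [Set.mem_Icc] at ht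
        have : (0:ℝ) < t := by linarith [ht.1]
        positivity)
    simp only [hfl2] at h
    have hintsub : ∫ t in Set.Ioc 2 b, deriv (fun t : ℝ => t⁻¹) t * (∑ k ∈ Finset.Icc 0 ⌊t⌋₊, c k)
        = - ∫ t in Set.Ioc 2 b, (t ^ 2)⁻¹ * P t := by
      rw [hderiv_eq, ← integral_neg]
      congr 1 with t
      simp [hPdef]
    rw [hintsub] at h
    have hfb : 2 ≤ ⌊b⌋₊ := Nat.le_floor (by exact_mod_cast hb)
    have hdisj : Disjoint (Finset.Icc 0 2) (Finset.Ioc 2 ⌊b⌋₊) := by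
      rw [Finset.disjoint_left]
      intro a ha ha'
      simp only [Finset.mem_Icc, Finset.mem_Ioc] at ha ha'
      omega
    have hsplitsum : ∑ k ∈ Finset.Icc 0 ⌊b⌋₊, (k : ℝ)⁻¹ * c k
        = (2 : ℝ)⁻¹ * c 2 + ∑ k ∈ Finset.Ioc 2 ⌊b⌋₊, (k : ℝ)⁻¹ * c k := by
      have hU : Finset.Icc 0 ⌊b⌋₊ = Finset.Icc 0 2 ∪ Finset.Ioc 2 ⌊b⌋₊ := by
        ext a
        simp only [Finset.mem_Icc, Finset.mem_union, Finset.mem_Ioc]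
        omega
      rw [hU, Finset.sum_union hdisj]
      congr 1
      rw [hIcc02]
      simp [hc0, hc1]
    have hP2 : (∑ k ∈ Finset.Icc 0 2, c k) = c 2 := by rw [hIcc02]; simp [hc0, hc1]
    rw [hsplitsum]
    simp only [hPdef]
    rw [h, hP2]
    ring
  -- epsilon bounds on E
  have hEb : ∀ ε : ℝ, 0 < ε → ∀ᶠ t in atTop, |E t| ≤ ε * (t / (Real.log t) ^ 2) := by
    intro ε hε
    filter_upwards [hcount'.def hε, eventually_ge_atTop (3 : ℝ)] with t ht h3
    have hlt : 0 < Real.log t := hlogpos t (by linarith)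
    have hnorm : ‖t / (Real.log t) ^ 2‖ = t / (Real.log t) ^ 2 :=
      Real.norm_of_nonneg (by positivity)
    calc |E t| = ‖E t‖ := rfl
      _ ≤ ε * ‖t / (Real.log t) ^ 2‖ := ht
      _ = ε * (t / (Real.log t) ^ 2) := by rw [hnorm]
  obtain ⟨x0, hx0⟩ := (hEb 1 one_pos).exists_forall_of_atTop
  set x1 : ℝ := max x0 3 with hx1def
  have hx1_3 : (3 : ℝ) ≤ x1 := le_max_right _ _
  -- integrable majorant on tails
  have hm : ∀ a : ℝ, 3 ≤ a →
      IntegrableOn (fun t => t⁻¹ / (Real.log t) ^ 2) (Set.Ioi a) volume ∧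
      ∫ t in Set.Ioi a, t⁻¹ / (Real.log t) ^ 2 = (Real.log a)⁻¹ := by
    intro a ha
    have hderiv : ∀ t ∈ Set.Ici a,
        HasDerivAt (fun s => -(Real.log s)⁻¹) (t⁻¹ / (Real.log t) ^ 2) t := by
      intro t ht
      have hta : a ≤ t := ht
      have ht0 : (0 : ℝ) < t := by linarith
      have hlt : 0 < Real.log t := hlogpos t (by linarith)
      have h1 : HasDerivAt Real.log t⁻¹ t := Real.hasDerivAt_log ht0.ne'
      have h2 := (h1.inv hlt.ne').neg
      have h3 : HasDerivAt (fun s => -(Real.log s)⁻¹) (-(-t⁻¹ / Real.log t ^ 2)) t := h2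
      rw [neg_div, neg_neg] at h3
      exact h3
    have htend : Tendsto (fun s : ℝ => -(Real.log s)⁻¹) atTop (𝓝 0) := by
      rw [← neg_zero]
      exact (Real.tendsto_log_atTop.inv_tendsto_atTop).neg
    have hint := integrableOn_Ioi_deriv_of_nonneg' hderiv
      (fun t ht => by
        have ht' : a < t := ht
        have ht0 : (0 : ℝ) < t := by linarith
        positivity) htend
    refine ⟨hint, ?_⟩
    rw [integral_Ioi_of_hasDerivAt_of_tendsto' hderiv hint htend]
    simp
  -- a.e.-measurability on subsets of [2, ∞)
  have hmeasOn : ∀ s : Set ℝ, MeasurableSet s → s ⊆ Set.Ici 2 →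
      AEStronglyMeasurable (fun t => (t ^ 2)⁻¹ * E t) (volume.restrict s) := by
    intro s hs hsub
    have h1 : AEStronglyMeasurable Li (volume.restrict s) :=
      (hLicontOn s hsub).aestronglyMeasurable hs
    have h2 : AEStronglyMeasurable E (volume.restrict s) :=
      (hPmeas.aestronglyMeasurable).sub (aestronglyMeasurable_const.mul h1)
    exact (((measurable_id.pow_const 2).inv).aestronglyMeasurable).mul h2
  -- integrability of the error integrand on (2, ∞)
  have hIntOn : IntegrableOn (fun t => (t ^ 2)⁻¹ * E t) (Set.Ioi 2) volume := by
    have h23 : (2 : ℝ) ≤ x1 := by linarith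
    rw [← Set.Ioc_union_Ioi_eq_Ioi h23]
    refine IntegrableOn.union ?_ ?_
    · obtain ⟨M, hM⟩ := (isCompact_Icc (a := (2 : ℝ)) (b := x1)).exists_bound_of_continuousOn
        (hLicontOn _ (fun t ht => ht.1))
      refine ⟨hmeasOn _ measurableSet_Ioc (fun t ht => le_of_lt ht.1), ?_⟩
      refine HasFiniteIntegral.restrict_of_bounded (C := P x1 + δ * M) measure_Ioc_lt_top ?_
      refine (ae_restrict_iff' measurableSet_Ioc).mpr (ae_of_all _ ?_)
      intro t ht
      have h2t : 2 < t := ht.1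
      have htx : t ≤ x1 := ht.2
      have hM' : |Li t| ≤ M := by
        have := hM t ⟨le_of_lt h2t, htx⟩
        rwa [Real.norm_eq_abs] at this
      have hMnn : 0 ≤ M := le_trans (abs_nonneg _) hM'
      have hEt : |E t| ≤ P x1 + δ * M := by
        simp only [hEdef]
        calc |P t - δ * Li t| ≤ |P t| + |δ * Li t| := abs_sub _ _
          _ = P t + δ * |Li t| := by
              rw [abs_of_nonneg (hPnonneg t), abs_mul, abs_of_nonneg hδ]
          _ ≤ P x1 + δ * M := by
              have := hPmono htx
              have := mul_le_mul_of_nonneg_left hM' hδ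
              linarith
      rw [norm_mul, Real.norm_eq_abs, Real.norm_eq_abs, abs_inv, abs_pow,
        abs_of_pos (by linarith : (0:ℝ) < t)]
      have ht2 : (1 : ℝ) ≤ t ^ 2 := by nlinarith
      have hinv1 : (t ^ 2)⁻¹ ≤ 1 := by
        have := (div_le_one (by nlinarith : (0:ℝ) < t ^ 2)).mpr ht2
        simpa [one_div] using this
      calc (t ^ 2)⁻¹ * |E t| ≤ 1 * (P x1 + δ * M) := by
            apply mul_le_mul hinv1 hEt (abs_nonneg _) one_pos.le
        _ = P x1 + δ * M := one_mul _
    · refine Integrable.mono ((hm x1 hx1_3).1)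
        (hmeasOn _ measurableSet_Ioi (fun t ht => by
          have : x1 < t := ht
          simp only [Set.mem_Ici]
          linarith)) ?_
      refine (ae_restrict_iff' measurableSet_Ioi).mpr (ae_of_all _ ?_)
      intro t ht
      have htx : x1 ≤ t := le_of_lt ht
      have hE1 : |E t| ≤ 1 * (t / Real.log t ^ 2) :=
        hx0 t (le_trans (le_max_left _ _) htx)
      have ht0 : (0 : ℝ) < t := by linarith
      have hlt : 0 < Real.log t := hlogpos t (by linarith)
      rw [norm_mul, Real.norm_eq_abs, Real.norm_eq_abs, abs_inv, abs_pow, abs_of_pos ht0,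
        Real.norm_eq_abs, abs_of_nonneg (by positivity : (0:ℝ) ≤ t⁻¹ / Real.log t ^ 2)]
      calc (t ^ 2)⁻¹ * |E t| ≤ (t ^ 2)⁻¹ * (t / Real.log t ^ 2) := by
            apply mul_le_mul_of_nonneg_left (by linarith) (by positivity)
        _ = t⁻¹ / Real.log t ^ 2 := by field_simp
  set CE : ℝ := ∫ t in Set.Ioi (2 : ℝ), (t ^ 2)⁻¹ * E t with hCEdef
  have htail : ∀ b : ℝ, 2 ≤ b →
      ∫ t in Set.Ioc 2 b, (t ^ 2)⁻¹ * E t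
        = CE - ∫ t in Set.Ioi b, (t ^ 2)⁻¹ * E t := by
    intro b hb
    have hsum := setIntegral_union (Set.Ioc_disjoint_Ioi le_rfl) measurableSet_Ioi
      (hIntOn.mono_set (fun t ht => ht.1))
      (hIntOn.mono_set (fun t ht => lt_of_le_of_lt hb ht))
    rw [Set.Ioc_union_Ioi_eq_Ioi hb] at hsum
    rw [hCEdef] at *
    linarith [hsum]
  -- FTC for the Li part
  have hLiFTC : ∀ b : ℝ, 2 ≤ b → ∫ t in Set.Ioc 2 b, (t ^ 2)⁻¹ * Li t
      = Real.log (Real.log b) - Li b * b⁻¹ - Real.log (Real.log 2) := by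
    intro b hb
    have hG : ∀ t ∈ Set.uIcc (2 : ℝ) b,
        HasDerivAt (fun s => Real.log (Real.log s) - Li s * s⁻¹) ((t ^ 2)⁻¹ * Li t) t := by
      intro t ht
      rw [Set.uIcc_of_le hb] at ht
      have ht2 : 2 ≤ t := ht.1
      have ht0 : (0 : ℝ) < t := by linarith
      have hlt : 0 < Real.log t := hlogpos t ht2
      have hL := hLideriv t ht2
      have hlog : HasDerivAt (fun s : ℝ => Real.log (Real.log s)) ((Real.log t)⁻¹ * t⁻¹) t :=
        (Real.hasDerivAt_log hlt.ne').comp t (Real.hasDerivAt_log ht0.ne')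
      have hinv : HasDerivAt (fun s : ℝ => s⁻¹) (-(t ^ 2)⁻¹) t := hasDerivAt_inv ht0.ne'
      have hdiv := hL.mul hinv
      have heq : (t ^ 2)⁻¹ * Li t
          = (Real.log t)⁻¹ * t⁻¹ - (1 / Real.log t * t⁻¹ + Li t * -(t ^ 2)⁻¹) := by
        rw [one_div]; ring
      rw [heq]
      exact hlog.sub hdiv
    have hint : IntervalIntegrable (fun t => (t ^ 2)⁻¹ * Li t) volume 2 b := by
      apply ContinuousOn.intervalIntegrable
      rw [Set.uIcc_of_le hb]
      refine ContinuousOn.mul (ContinuousOn.inv₀ (by fun_prop) ?_)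
        (hLicontOn _ (fun t ht => ht.1))
      intro t ht
      have : (0 : ℝ) < t := by linarith [ht.1]
      positivity
    rw [← intervalIntegral.integral_of_le hb,
      intervalIntegral.integral_eq_sub_of_hasDerivAt hG hint]
    have hLi2 : Li 2 = 0 := intervalIntegral.integral_same
    rw [hLi2]
    ring
  -- splitting the main integral
  have hsplit : ∀ b : ℝ, 2 ≤ b → ∫ t in Set.Ioc 2 b, (t ^ 2)⁻¹ * P t
      = δ * (∫ t in Set.Ioc 2 b, (t ^ 2)⁻¹ * Li t) + ∫ t in Set.Ioc 2 b, (t ^ 2)⁻¹ * E t := by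
    intro b hb
    have hILi : IntegrableOn (fun t => (t ^ 2)⁻¹ * Li t) (Set.Ioc 2 b) volume := by
      refine (ContinuousOn.integrableOn_Icc ?_).mono_set Set.Ioc_subset_Icc_self
      refine ContinuousOn.mul (ContinuousOn.inv₀ (by fun_prop) ?_)
        (hLicontOn _ (fun t ht => ht.1))
      intro t ht
      have : (0 : ℝ) < t := by linarith [ht.1]
      positivity
    have hIE : IntegrableOn (fun t => (t ^ 2)⁻¹ * E t) (Set.Ioc 2 b) volume :=
      hIntOn.mono_set (fun t ht => ht.1)
    have hfun : (fun t : ℝ => (t ^ 2)⁻¹ * P t)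
        = fun t => δ * ((t ^ 2)⁻¹ * Li t) + (t ^ 2)⁻¹ * E t := by
      funext t
      simp only [hEdef]
      ring
    rw [hfun, integral_add (hILi.const_mul δ) hIE, integral_const_mul]
  refine ⟨CE - δ * Real.log (Real.log 2), ?_⟩
  have hkey : ∀ b : ℝ, 2 ≤ b →
      (∑ k ∈ Finset.Icc 0 ⌊b⌋₊, (k : ℝ)⁻¹ * c k)
        - (δ * Real.log (Real.log b) + (CE - δ * Real.log (Real.log 2)))
      = b⁻¹ * E b - ∫ t in Set.Ioi b, (t ^ 2)⁻¹ * E t := by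
    intro b hb
    rw [habel b hb, hsplit b hb, hLiFTC b hb, htail b hb]
    simp only [hEdef]
    ring
  have hlog_tendsto : Tendsto (fun b : ℝ => 1 / Real.log b) atTop (𝓝 0) := by
    have := Real.tendsto_log_atTop.inv_tendsto_atTop
    simp only [one_div]
    exact this
  have h1 : (fun b : ℝ => b⁻¹ * E b) =o[atTop] fun b => 1 / Real.log b := by
    have a1 : (fun b : ℝ => b⁻¹ * E b) =o[atTop] fun b => b⁻¹ * (b / Real.log b ^ 2) :=
      (isBigO_refl (fun b : ℝ => b⁻¹) atTop).mul_isLittleO hcount'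
    have a2 : (fun b : ℝ => b⁻¹ * (b / Real.log b ^ 2)) =ᶠ[atTop]
        fun b => (1 / Real.log b) * (1 / Real.log b) := by
      filter_upwards [eventually_ge_atTop (3 : ℝ)] with b hb
      have hb0 : (0 : ℝ) < b := by linarith
      have hlb : 0 < Real.log b := hlogpos b (by linarith)
      field_simp
    have a3 : (fun b : ℝ => (1 / Real.log b) * (1 / Real.log b)) =o[atTop]
        fun b => 1 * (1 / Real.log b) :=
      ((isLittleO_one_iff ℝ).mpr hlog_tendsto).mul_isBigO (isBigO_refl _ _)
    have a4 : (fun b : ℝ => (1 / Real.log b) * (1 / Real.log b)) =o[atTop]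
        fun b => 1 / Real.log b := by
      simpa using a3
    exact (a1.trans_eventuallyEq a2).trans a4
  have h2 : (fun b : ℝ => ∫ t in Set.Ioi b, (t ^ 2)⁻¹ * E t) =o[atTop]
      fun b => 1 / Real.log b := by
    rw [isLittleO_iff]
    intro ε hε
    obtain ⟨x2, hx2⟩ := (hEb ε hε).exists_forall_of_atTop
    filter_upwards [eventually_ge_atTop (max x1 x2)] with b hb
    have hb1 : x1 ≤ b := le_trans (le_max_left _ _) hb
    have hb2 : x2 ≤ b := le_trans (le_max_right _ _) hb
    have hb3 : (3 : ℝ) ≤ b := le_trans hx1_3 hb1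
    have hlb : 0 < Real.log b := hlogpos b (by linarith)
    have hIoi : IntegrableOn (fun t => (t ^ 2)⁻¹ * E t) (Set.Ioi b) volume :=
      hIntOn.mono_set (fun t ht => lt_of_le_of_lt (by linarith : (2 : ℝ) ≤ b) ht)
    calc ‖∫ t in Set.Ioi b, (t ^ 2)⁻¹ * E t‖
        ≤ ∫ t in Set.Ioi b, ‖(t ^ 2)⁻¹ * E t‖ := norm_integral_le_integral_norm _
      _ ≤ ∫ t in Set.Ioi b, ε * (t⁻¹ / Real.log t ^ 2) := by
          refine setIntegral_mono_on hIoi.norm ((hm b hb3).1.const_mul ε)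
            measurableSet_Ioi ?_
          intro t ht
          have htb : b < t := ht
          have ht0 : (0 : ℝ) < t := by linarith
          have hlt : 0 < Real.log t := hlogpos t (by linarith)
          have hEt : |E t| ≤ ε * (t / Real.log t ^ 2) := hx2 t (by linarith)
          rw [norm_mul, Real.norm_eq_abs, Real.norm_eq_abs, abs_inv, abs_pow,
            abs_of_pos ht0]
          calc (t ^ 2)⁻¹ * |E t| ≤ (t ^ 2)⁻¹ * (ε * (t / Real.log t ^ 2)) := by
                apply mul_le_mul_of_nonneg_left hEt (by positivity)
            _ = ε * (t⁻¹ / Real.log t ^ 2) := by field_simp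
      _ = ε * (Real.log b)⁻¹ := by rw [integral_const_mul, (hm b hb3).2]
      _ ≤ ε * ‖1 / Real.log b‖ := by
          rw [Real.norm_eq_abs, abs_of_pos (by positivity), one_div]
  have hfinal := h1.sub h2
  refine hfinal.congr' ?_ EventuallyEq.rfl
  filter_upwards [eventually_ge_atTop (2 : ℝ)] with b hb
  exact (hkey b hb).symm

/-- Abel summation step of Corollary 1.2: a Chebotarev-type counting asymptotic
`#{𝔭 ∈ A : N𝔭 ≤ x} = δ·Li(x) + o(x/(log x)²)` implies the Mertens-type asymptotic
`∑_{𝔭 ∈ A, N𝔭 ≤ x} 1/N𝔭 = δ·log log x + C + o(1/log x)` for some constant `C`. -/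
theorem counting_to_mertens
    (K : Type*) [Field K] [NumberField K]
    (A : Set (Ideal (𝓞 K)))
    (hA : ∀ I ∈ A, I.IsPrime ∧ I ≠ ⊥)
    (δ : ℝ) (hδ : 0 ≤ δ)
    (hcount : (fun x : ℝ =>
        (Nat.card {I : Ideal (𝓞 K) // I ∈ A ∧ (Ideal.absNorm I : ℝ) ≤ x} : ℝ) -
          δ * ∫ t in (2 : ℝ)..x, 1 / Real.log t)
        =o[atTop] fun x : ℝ => x / (Real.log x) ^ 2) :
    ∃ C : ℝ, (fun x : ℝ =>
        (∑' 𝔭 : {I : Ideal (𝓞 K) // I ∈ A ∧ (Ideal.absNorm I : ℝ) ≤ x},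
          (1 : ℝ) / (Ideal.absNorm 𝔭.1 : ℝ)) - (δ * Real.log (Real.log x) + C))
        =o[atTop] fun x : ℝ => 1 / Real.log x := by
  classical
  have hfin : ∀ x : ℝ, {I : Ideal (𝓞 K) | I ∈ A ∧ (Ideal.absNorm I : ℝ) ≤ x}.Finite := fun x =>
    (Ideal.finite_setOf_absNorm_le ⌊x⌋₊).subset (fun I hI => Nat.le_floor hI.2)
  have hfineq : ∀ n : ℕ, {I : Ideal (𝓞 K) | I ∈ A ∧ Ideal.absNorm I = n}.Finite := fun n =>
    (Ideal.finite_setOf_absNorm_eq n).subset (fun I hI => hI.2)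
  set c : ℕ → ℝ := fun n => ((hfineq n).toFinset.card : ℝ) with hcdef
  have hc : ∀ n, 0 ≤ c n := fun n => Nat.cast_nonneg _
  have hc0 : c 0 = 0 := by
    have h0 : {I : Ideal (𝓞 K) | I ∈ A ∧ Ideal.absNorm I = 0} = ∅ := by
      ext I
      simp only [Set.mem_setOf_eq, Set.mem_empty_iff_false, iff_false, not_and]
      intro hIA h0
      exact (hA I hIA).2 (Ideal.absNorm_eq_zero_iff.mp h0)
    simp only [hcdef]
    rw [Set.Finite.toFinset_eq_empty.mpr h0]
    simp
  have hc1 : c 1 = 0 := by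
    have h0 : {I : Ideal (𝓞 K) | I ∈ A ∧ Ideal.absNorm I = 1} = ∅ := by
      ext I
      simp only [Set.mem_setOf_eq, Set.mem_empty_iff_false, iff_false, not_and]
      intro hIA h0
      exact (hA I hIA).1.ne_top (Ideal.absNorm_eq_one_iff.mp h0)
    simp only [hcdef]
    rw [Set.Finite.toFinset_eq_empty.mpr h0]
    simp
  -- generic fiberwise computation
  have hgen : ∀ (x : ℝ), 0 ≤ x → ∀ f : ℕ → ℝ,
      (∑ I ∈ (hfin x).toFinset, f (Ideal.absNorm I))
        = ∑ k ∈ Finset.Icc 0 ⌊x⌋₊, c k * f k := by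
    intro x hx f
    rw [← Finset.sum_fiberwise_of_maps_to (g := fun I => Ideal.absNorm I)
        (t := Finset.Icc 0 ⌊x⌋₊)
        (fun I hI => by
          rw [Set.Finite.mem_toFinset] at hI
          simp only [Finset.mem_Icc]
          exact ⟨Nat.zero_le _, Nat.le_floor hI.2⟩)
        (fun I => f (Ideal.absNorm I))]
    refine Finset.sum_congr rfl fun k hk => ?_
    have hfiber : (hfin x).toFinset.filter (fun I => Ideal.absNorm I = k)
        = (hfineq k).toFinset := by
      ext I
      simp only [Finset.mem_filter, Set.Finite.mem_toFinset, Set.mem_setOf_eq]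
      constructor
      · rintro ⟨⟨h1, _⟩, h3⟩
        exact ⟨h1, h3⟩
      · rintro ⟨h1, h2⟩
        refine ⟨⟨h1, ?_⟩, h2⟩
        rw [h2]
        simp only [Finset.mem_Icc] at hk
        exact le_trans (Nat.cast_le.mpr hk.2) (Nat.floor_le hx)
    have hcongr : ∑ I ∈ (hfin x).toFinset.filter (fun I => Ideal.absNorm I = k),
        f (Ideal.absNorm I)
        = ∑ I ∈ (hfin x).toFinset.filter (fun I => Ideal.absNorm I = k), f k :=
      Finset.sum_congr rfl fun I hI => by rw [(Finset.mem_filter.mp hI).2]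
    rw [hcongr, Finset.sum_const, hfiber, nsmul_eq_mul]
  have hcard : ∀ x : ℝ, 0 ≤ x →
      ((Nat.card {I : Ideal (𝓞 K) // I ∈ A ∧ (Ideal.absNorm I : ℝ) ≤ x}) : ℝ)
        = ∑ k ∈ Finset.Icc 0 ⌊x⌋₊, c k := by
    intro x hx
    have h1 : Nat.card {I : Ideal (𝓞 K) // I ∈ A ∧ (Ideal.absNorm I : ℝ) ≤ x}
        = (hfin x).toFinset.card := by
      have h2 := Set.ncard_eq_toFinset_card _ (hfin x)
      rw [← h2]
      exact Nat.card_coe_set_eq _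
    rw [h1]
    have h3 := hgen x hx (fun _ => (1 : ℝ))
    simp only [mul_one] at h3
    rw [← h3, Finset.card_eq_sum_ones]
    push_cast
    rfl
  have htsum : ∀ x : ℝ, 0 ≤ x →
      (∑' 𝔭 : {I : Ideal (𝓞 K) // I ∈ A ∧ (Ideal.absNorm I : ℝ) ≤ x},
          (1 : ℝ) / (Ideal.absNorm 𝔭.1 : ℝ))
        = ∑ k ∈ Finset.Icc 0 ⌊x⌋₊, (k : ℝ)⁻¹ * c k := by
    intro x hx
    haveI : Fintype {I : Ideal (𝓞 K) // I ∈ A ∧ (Ideal.absNorm I : ℝ) ≤ x} :=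
      (hfin x).fintype
    rw [tsum_fintype]
    have h4 : (∑ I ∈ (hfin x).toFinset, (1 : ℝ) / (Ideal.absNorm I : ℝ))
        = ∑ 𝔭 : {I : Ideal (𝓞 K) // I ∈ A ∧ (Ideal.absNorm I : ℝ) ≤ x},
          (1 : ℝ) / (Ideal.absNorm 𝔭.1 : ℝ) :=
      Finset.sum_subtype _ (fun I => (hfin x).mem_toFinset) _
    rw [← h4, hgen x hx (fun k => (1 : ℝ) / (k : ℝ))]
    refine Finset.sum_congr rfl fun k _ => ?_
    rw [one_div, mul_comm]
  have hcount2 : (fun x : ℝ => (∑ k ∈ Finset.Icc 0 ⌊x⌋₊, c k) -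
      δ * ∫ t in (2 : ℝ)..x, 1 / Real.log t)
      =o[atTop] fun x : ℝ => x / (Real.log x) ^ 2 := by
    refine hcount.congr' ?_ EventuallyEq.rfl
    filter_upwards [eventually_ge_atTop (0 : ℝ)] with x hx
    rw [hcard x hx]
  obtain ⟨C, hC⟩ := mertens_aux c hc hc0 hc1 δ hδ hcount2
  refine ⟨C, hC.congr' ?_ EventuallyEq.rfl⟩
  filter_upwards [eventually_ge_atTop (0 : ℝ)] with x hx
  rw [htsum x hx]
end

section
/- Let B(x) = #{n : 1 ≤ n ≤ x, the base-10 expansion of n begins with the digit 1}. Then liminf_{x→∞} B(x)/x = 1/9 and limsup_{x→∞} B(x)/x = 5/9. -/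
open Filter Real

open Finset
open Finset

def Lead1 (n : ℕ) : Prop := ∃ t : ℕ, 10 ^ t ≤ n ∧ n < 2 * 10 ^ t

open scoped Classical in
noncomputable def lb (N : ℕ) : ℕ := ((Finset.Icc 1 N).filter Lead1).card

open scoped Classical

lemma lead1_of_decade {k n : ℕ} (h1 : 10 ^ k ≤ n) (h2 : n < 2 * 10 ^ k) : Lead1 n := ⟨k, h1, h2⟩

lemma lead1_decade {k n : ℕ} (h1 : 10 ^ k ≤ n) (h2 : n < 10 ^ (k + 1)) (h : Lead1 n) :
    n < 2 * 10 ^ k := by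
  obtain ⟨t, ht1, ht2⟩ := h
  have htk : t = k := by
    have h3 : (10:ℕ) ^ t < 10 ^ (k + 1) := lt_of_le_of_lt ht1 h2
    have h4 : t < k + 1 := by
      exact (Nat.pow_lt_pow_iff_right (by norm_num)).mp h3
    have h5 : (10:ℕ) ^ k < 10 ^ (t + 1) := by
      calc (10:ℕ) ^ k ≤ n := h1
        _ < 2 * 10 ^ t := ht2
        _ ≤ 10 ^ (t + 1) := by rw [pow_succ]; omega
    have h6 : k < t + 1 := (Nat.pow_lt_pow_iff_right (by norm_num)).mp h5
    omega
  rwa [htk] at ht2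

lemma lb_split {M N : ℕ} (h : M ≤ N) :
    lb N = lb M + ((Finset.Icc (M + 1) N).filter Lead1).card := by
  unfold lb
  have hU : Finset.Icc 1 N = Finset.Icc 1 M ∪ Finset.Icc (M + 1) N := by
    ext n
    simp only [Finset.mem_union, Finset.mem_Icc]
    omega
  rw [hU, Finset.filter_union, Finset.card_union_of_disjoint]
  rw [Finset.disjoint_left]
  intro a ha hb
  simp only [Finset.mem_filter, Finset.mem_Icc] at ha hb
  omega

lemma lb_le {M N : ℕ} (h : M ≤ N) : lb N ≤ lb M + (N - M) := by
  rw [lb_split h]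
  have := Finset.card_filter_le (Finset.Icc (M + 1) N) Lead1
  have h2 : (Finset.Icc (M + 1) N).card = N - M := by rw [Nat.card_Icc]; omega
  omega

lemma lb_mono {M N : ℕ} (h : M ≤ N) : lb M ≤ lb N := by
  rw [lb_split h]; omega

lemma lb_ge {k m N : ℕ} (h1 : 10 ^ k ≤ m) (h2 : m < 2 * 10 ^ k) (h3 : m ≤ N) :
    lb (10 ^ k - 1) + (m + 1 - 10 ^ k) ≤ lb N := by
  have hk1 : 1 ≤ (10:ℕ) ^ k := Nat.one_le_pow _ _ (by norm_num)
  rw [lb_split (M := 10 ^ k - 1) (N := N) (by omega)]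
  have hsub : Finset.Icc (10 ^ k) m ⊆ (Finset.Icc (10 ^ k - 1 + 1) N).filter Lead1 := by
    intro n hn
    simp only [Finset.mem_Icc] at hn
    simp only [Finset.mem_filter, Finset.mem_Icc]
    exact ⟨⟨by omega, by omega⟩, lead1_of_decade hn.1 (by omega)⟩
  have := Finset.card_le_card hsub
  rw [Nat.card_Icc] at this
  omega

lemma filter_upper_empty (k : ℕ) :
    ((Finset.Icc (2 * 10 ^ k) (10 ^ (k + 1) - 1)).filter Lead1) = ∅ := by
  ext n
  simp only [Finset.mem_filter, Finset.mem_Icc, Finset.notMem_empty, iff_false, not_and]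
  rintro ⟨hn1, hn2⟩ hl
  have hk1 : 1 ≤ (10:ℕ) ^ k := Nat.one_le_pow _ _ (by norm_num)
  have h10 : (10:ℕ) ^ (k+1) = 10 * 10 ^ k := by rw [pow_succ]; ring
  have := lead1_decade (k := k) (by omega) (by omega) hl
  omega

lemma lb_exact (k : ℕ) : 9 * lb (10 ^ k - 1) = 10 ^ k - 1 := by
  induction k with
  | zero => simp [lb]
  | succ k ih =>
    have hk1 : 1 ≤ (10:ℕ) ^ k := Nat.one_le_pow _ _ (by norm_num)
    have h10 : (10:ℕ) ^ (k+1) = 10 * 10 ^ k := by rw [pow_succ]; ring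
    have hup : lb (10 ^ (k + 1) - 1) ≤ lb (10 ^ k - 1) + 10 ^ k := by
      have h1 : lb (10 ^ (k + 1) - 1) = lb (2 * 10 ^ k - 1) := by
        rw [lb_split (M := 2 * 10 ^ k - 1) (N := 10 ^ (k+1) - 1) (by omega)]
        have : (2 * 10 ^ k - 1 + 1) = 2 * 10 ^ k := by omega
        rw [this, filter_upper_empty]
        simp
      have h2 := lb_le (M := 10 ^ k - 1) (N := 2 * 10 ^ k - 1) (by omega)
      omega
    have hlo := lb_ge (k := k) (m := 2 * 10 ^ k - 1) (N := 10 ^ (k+1) - 1)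
      (by omega) (by omega) (by omega)
    omega

lemma lb_lower (N : ℕ) (hN : 1 ≤ N) : N ≤ 9 * lb N := by
  set k := Nat.log 10 N with hk
  have h1 : 10 ^ k ≤ N := Nat.pow_log_le_self 10 (by omega)
  have h2 : N < 10 ^ (k + 1) := Nat.lt_pow_succ_log_self (by norm_num) N
  have hk1 : 1 ≤ (10:ℕ) ^ k := Nat.one_le_pow _ _ (by norm_num)
  have h10 : (10:ℕ) ^ (k+1) = 10 * 10 ^ k := by rw [pow_succ]; ring
  have hE := lb_exact k
  by_cases hc : N < 2 * 10 ^ k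
  · have := lb_ge (k := k) (m := N) h1 hc le_rfl
    omega
  · have := lb_ge (k := k) (m := 2 * 10 ^ k - 1) (N := N) (by omega) (by omega) (by omega)
    omega

lemma lb_upper (N : ℕ) : 9 * lb N ≤ 5 * N + 5 := by
  rcases Nat.eq_zero_or_pos N with h0 | hN
  · subst h0; simp [lb]
  set k := Nat.log 10 N with hk
  have h1 : 10 ^ k ≤ N := Nat.pow_log_le_self 10 (by omega)
  have h2 : N < 10 ^ (k + 1) := Nat.lt_pow_succ_log_self (by norm_num) N
  have hk1 : 1 ≤ (10:ℕ) ^ k := Nat.one_le_pow _ _ (by norm_num)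
  have h10 : (10:ℕ) ^ (k+1) = 10 * 10 ^ k := by rw [pow_succ]; ring
  have hE := lb_exact k
  by_cases hc : N < 2 * 10 ^ k
  · have := lb_le (M := 10 ^ k - 1) (N := N) (by omega)
    omega
  · have := lb_mono (M := N) (N := 10 ^ (k + 1) - 1) (by omega)
    have hE2 := lb_exact (k + 1)
    omega

lemma lb_special (k : ℕ) : 10 ^ (k + 1) - 1 ≤ 9 * lb (2 * 10 ^ k - 1) := by
  have hk1 : 1 ≤ (10:ℕ) ^ k := Nat.one_le_pow _ _ (by norm_num)
  have h10 : (10:ℕ) ^ (k+1) = 10 * 10 ^ k := by rw [pow_succ]; ring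
  have hE := lb_exact k
  have := lb_ge (k := k) (m := 2 * 10 ^ k - 1) (N := 2 * 10 ^ k - 1) (by omega) (by omega) le_rfl
  omega



noncomputable def g (x : ℝ) : ℝ := (lb ⌊x⌋₊ : ℝ) / x

lemma card_eq (x : ℝ) (hx : 0 ≤ x) :
    (Nat.card {n : ℕ // 1 ≤ n ∧ (n : ℝ) ≤ x ∧ ∃ t : ℕ, 10 ^ t ≤ n ∧ n < 2 * 10 ^ t} : ℕ)
      = lb ⌊x⌋₊ := by
  have hset : {n : ℕ | 1 ≤ n ∧ (n : ℝ) ≤ x ∧ Lead1 n}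
      = ↑((Finset.Icc 1 ⌊x⌋₊).filter Lead1) := by
    ext n
    simp only [Set.mem_setOf_eq, Finset.coe_filter, Finset.mem_Icc, Set.mem_setOf_eq,
      ← Nat.le_floor_iff hx]
    tauto
  calc Nat.card {n : ℕ // 1 ≤ n ∧ (n : ℝ) ≤ x ∧ Lead1 n}
      = ({n : ℕ | 1 ≤ n ∧ (n : ℝ) ≤ x ∧ Lead1 n}).ncard := Nat.card_coe_set_eq _
    _ = lb ⌊x⌋₊ := by rw [hset, Set.ncard_coe_finset]; rfl

-- limits of bounding functions
lemma tendsto_low : Tendsto (fun x : ℝ => (x - 1) / (9 * x)) atTop (nhds (1 / 9)) := by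
  have h : Tendsto (fun x : ℝ => 1 / 9 - 1 / 9 * x⁻¹) atTop (nhds (1 / 9 - 1 / 9 * 0)) :=
    tendsto_const_nhds.sub (tendsto_inv_atTop_zero.const_mul _)
  rw [mul_zero, sub_zero] at h
  refine h.congr' ?_
  filter_upwards [eventually_gt_atTop (0 : ℝ)] with x hx
  field_simp

lemma tendsto_up : Tendsto (fun x : ℝ => (5 * x + 5) / (9 * x)) atTop (nhds (5 / 9)) := by
  have h : Tendsto (fun x : ℝ => 5 / 9 + 5 / 9 * x⁻¹) atTop (nhds (5 / 9 + 5 / 9 * 0)) :=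
    tendsto_const_nhds.add (tendsto_inv_atTop_zero.const_mul _)
  rw [mul_zero, add_zero] at h
  refine h.congr' ?_
  filter_upwards [eventually_gt_atTop (0 : ℝ)] with x hx
  field_simp

lemma g_low : ∀ᶠ x : ℝ in atTop, (x - 1) / (9 * x) ≤ g x := by
  filter_upwards [eventually_ge_atTop (1 : ℝ)] with x hx
  have hx0 : (0 : ℝ) < x := by linarith
  have hf1 : 1 ≤ ⌊x⌋₊ := Nat.one_le_floor_iff x |>.mpr hx
  have h1 : (⌊x⌋₊ : ℕ) ≤ 9 * lb ⌊x⌋₊ := lb_lower _ hf1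
  have h2 : x - 1 ≤ (⌊x⌋₊ : ℝ) := by
    have := Nat.lt_floor_add_one x
    linarith
  have h3 : x - 1 ≤ 9 * (lb ⌊x⌋₊ : ℝ) := by
    calc x - 1 ≤ (⌊x⌋₊ : ℝ) := h2
      _ ≤ 9 * (lb ⌊x⌋₊ : ℝ) := by exact_mod_cast h1
  unfold g
  rw [div_le_div_iff₀ (by positivity) hx0]
  nlinarith
lemma g_up : ∀ᶠ x : ℝ in atTop, g x ≤ (5 * x + 5) / (9 * x) := by
  filter_upwards [eventually_ge_atTop (1 : ℝ)] with x hx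
  have hx0 : (0 : ℝ) < x := by linarith
  have h1 : 9 * lb ⌊x⌋₊ ≤ 5 * ⌊x⌋₊ + 5 := lb_upper _
  have h2 : (⌊x⌋₊ : ℝ) ≤ x := Nat.floor_le (by linarith)
  have h3 : 9 * (lb ⌊x⌋₊ : ℝ) ≤ 5 * x + 5 := by
    calc 9 * (lb ⌊x⌋₊ : ℝ) ≤ 5 * (⌊x⌋₊ : ℝ) + 5 := by exact_mod_cast h1
      _ ≤ 5 * x + 5 := by linarith
  unfold g
  rw [div_le_div_iff₀ hx0 (by positivity)]
  nlinarith

lemma g_nonneg : ∀ᶠ x : ℝ in atTop, (0 : ℝ) ≤ g x := by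
  filter_upwards [eventually_gt_atTop (0 : ℝ)] with x hx
  unfold g; positivity

lemma g_bddAbove : IsBoundedUnder (· ≤ ·) atTop g := by
  refine ⟨2, ?_⟩
  rw [eventually_map]
  filter_upwards [g_up, eventually_ge_atTop (1 : ℝ)] with x h1 hx
  have hx0 : (0 : ℝ) < x := by linarith
  have : (5 * x + 5) / (9 * x) ≤ 2 := by
    rw [div_le_iff₀ (by positivity)]
    linarith
  linarith

lemma g_bddBelow : IsBoundedUnder (· ≥ ·) atTop g := by
  refine ⟨0, ?_⟩
  rw [eventually_map]
  exact g_nonneg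

lemma kx_large (a : ℝ) (k : ℕ) (hk : max 1 ⌈a⌉₊ ≤ k) : a ≤ ((10 ^ k - 1 : ℕ) : ℝ) := by
  have h1 : k < 10 ^ k := Nat.lt_pow_self (by norm_num : 1 < 10)
  have h2 : (⌈a⌉₊ : ℕ) ≤ 10 ^ k - 1 := by omega
  calc a ≤ (⌈a⌉₊ : ℝ) := Nat.le_ceil a
    _ ≤ ((10 ^ k - 1 : ℕ) : ℝ) := by exact_mod_cast h2

lemma g_freq_le : ∃ᶠ x : ℝ in atTop, g x ≤ 1 / 9 := by
  rw [frequently_atTop]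
  intro a
  set k := max 1 ⌈a⌉₊ with hk
  refine ⟨((10 ^ k - 1 : ℕ) : ℝ), kx_large a k le_rfl, ?_⟩
  set c : ℕ := 10 ^ k - 1 with hc
  have hk1 : 1 ≤ k := le_max_left _ _
  have hcpos : 9 ≤ c := by
    have : (10 : ℕ) ^ 1 ≤ 10 ^ k := Nat.pow_le_pow_right (by norm_num) hk1
    simp only [hc]; omega
  have hE : 9 * lb c = c := by
    rw [hc]; exact lb_exact k
  unfold g
  rw [Nat.floor_natCast]
  have hc0 : (0 : ℝ) < (c : ℝ) := by exact_mod_cast (by omega : 0 < c)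
  rw [div_le_div_iff₀ hc0 (by norm_num)]
  have : (9 : ℝ) * (lb c : ℝ) = (c : ℝ) := by exact_mod_cast hE
  linarith

lemma g_freq_ge : ∃ᶠ x : ℝ in atTop, 5 / 9 ≤ g x := by
  rw [frequently_atTop]
  intro a
  set k := max 1 ⌈a⌉₊ with hk
  have h1 : k < 10 ^ k := Nat.lt_pow_self (by norm_num : 1 < 10)
  set c : ℕ := 2 * 10 ^ k - 1 with hc
  have hax : a ≤ ((c : ℕ) : ℝ) := by
    have h2 : (10 ^ k - 1 : ℕ) ≤ c := by omega
    calc a ≤ ((10 ^ k - 1 : ℕ) : ℝ) := kx_large a k le_rfl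
      _ ≤ (c : ℝ) := by exact_mod_cast h2
  refine ⟨((c : ℕ) : ℝ), hax, ?_⟩
  have hpow : 1 ≤ (10:ℕ) ^ k := Nat.one_le_pow _ _ (by norm_num)
  have hE : 5 * c ≤ 9 * lb c := by
    rw [hc]
    have := lb_special k
    have h10 : (10:ℕ) ^ (k+1) = 10 * 10 ^ k := by rw [pow_succ]; ring
    omega
  unfold g
  rw [Nat.floor_natCast]
  have hc0 : (0 : ℝ) < (c : ℝ) := by exact_mod_cast (by omega : 0 < c)
  rw [div_le_div_iff₀ (by norm_num) hc0]
  have : (5 : ℝ) * (c : ℝ) ≤ 9 * (lb c : ℝ) := by exact_mod_cast hE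
  linarith


/-- The natural density of integers with leading base-10 digit `1` does not exist:
with `B(x) = #{n : 1 ≤ n ≤ x, n begins with the digit 1 in base 10}`, the liminf of
`B(x)/x` is `1/9` and the limsup is `5/9`. -/
theorem integers_leading_digit_one_density :
    Filter.liminf (fun x : ℝ =>
      (Nat.card {n : ℕ // 1 ≤ n ∧ (n : ℝ) ≤ x ∧ ∃ t : ℕ, 10 ^ t ≤ n ∧ n < 2 * 10 ^ t} : ℝ)
        / x) atTop = 1 / 9 ∧
    Filter.limsup (fun x : ℝ =>
      (Nat.card {n : ℕ // 1 ≤ n ∧ (n : ℝ) ≤ x ∧ ∃ t : ℕ, 10 ^ t ≤ n ∧ n < 2 * 10 ^ t} : ℝ)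
        / x) atTop = 5 / 9 := by
  have heq : ∀ᶠ x : ℝ in atTop,
      (Nat.card {n : ℕ // 1 ≤ n ∧ (n : ℝ) ≤ x ∧ ∃ t : ℕ, 10 ^ t ≤ n ∧ n < 2 * 10 ^ t} : ℝ)
        / x = g x := by
    filter_upwards [eventually_ge_atTop (0 : ℝ)] with x hx
    rw [card_eq x hx]
    rfl
  constructor
  · rw [liminf_congr heq]
    apply le_antisymm
    · exact liminf_le_of_frequently_le g_freq_le g_bddBelow
    · have h1 : liminf (fun x : ℝ => (x - 1) / (9 * x)) atTop = 1 / 9 :=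
        tendsto_low.liminf_eq
      calc (1 : ℝ) / 9 = liminf (fun x : ℝ => (x - 1) / (9 * x)) atTop := h1.symm
        _ ≤ liminf g atTop :=
          liminf_le_liminf g_low tendsto_low.isBoundedUnder_ge
            g_bddAbove.isCoboundedUnder_ge
  · rw [limsup_congr heq]
    apply le_antisymm
    · have h1 : limsup (fun x : ℝ => (5 * x + 5) / (9 * x)) atTop = 5 / 9 :=
        tendsto_up.limsup_eq
      calc limsup g atTop ≤ limsup (fun x : ℝ => (5 * x + 5) / (9 * x)) atTop :=
          limsup_le_limsup g_up g_bddBelow.isCoboundedUnder_le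
            tendsto_up.isBoundedUnder_le
        _ = 5 / 9 := h1
    · exact le_limsup_of_frequently_le g_freq_ge g_bddAbove
end
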